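/- arXiv:2206.06954 — 9 statements merged into one kernel-verified Lean document; each statement's English description precedes it below -/
import Mathlib

section
/- For a symmetric conductance matrix A of a network on n vertices whose underlying graph has maximum clique size k, and for 1 < p < 2, the largest eigenvalue satisfies λ₁(A) ≤ φ_{p/(2(p-1))}(k)^{(p-1)/p} · ‖A‖_p, where ‖A‖_p is the entrywise L^p-quasinorm. -/
/-- `φ_θ(k) = sup { ∑_{i ≠ j} |v i|^θ |v j|^θ : v ∈ ℝ^k, ‖v‖₁ = 1 }`. -/
noncomputable def phiVar (θ : ℝ) (k : ℕ) : ℝ :=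
  ⨆ v : {v : Fin k → ℝ // ∑ i, |v i| = 1},
    ∑ i : Fin k, ∑ j : Fin k, if i ≠ j then |v.1 i| ^ θ * |v.1 j| ^ θ else 0

/-!
For a unit eigenvector `x` of the top eigenvalue, `λ₁ = xᵀ A x`, and Hölder's inequality over the
edges of `G` gives `λ₁ ≤ (∑_{a ∼ b} |x a|^q |x b|^q)^{1/q} ‖A‖_p` with `q = p / (p - 1)`.
With `v = x²`, a point of the simplex, and `θ = q / 2`, which is `≥ 1` because `p < 2`, the sum
is `∑_{a ∼ b} (v a)^θ (v b)^θ`. A Motzkin–Straus shifting argument bounds it by `φ_θ(k)`. If two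
non-adjacent vertices `i, j` both carry mass and `j` has the larger weighted neighbourhood, then
moving all the mass of `i` onto `j` does not decrease the sum: for non-adjacent `i, j` the form
`∑_{a ∼ b} w a w b` is affine along the move, and `t ↦ t^θ` is superadditive. The support
shrinks, so eventually it is a clique, of at most `k` vertices, and the sum is then bounded by
the off-diagonal sum defining `φ_θ(k)`.
-/

open Finset Matrix

section moveMass

variable {V : Type*} [DecidableEq V]

def moveMass (x : V → ℝ) (i j : V) : V → ℝ := x + x i • (Pi.single j 1 - Pi.single i 1)

variable {x : V → ℝ} {i j : V}

theorem moveMass_apply (hij : i ≠ j) (c : V) :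
    moveMass x i j c = if c = i then 0 else if c = j then x i + x j else x c := by
  by_cases hci : c = i
  · subst hci; simp [moveMass, hij]
  by_cases hcj : c = j
  · subst hcj; simp [moveMass, Ne.symm hij, add_comm]
  simp [moveMass, hci, hcj]

theorem sum_moveMass [Fintype V] : ∑ c, moveMass x i j c = ∑ c, x c := by
  simp [moveMass, sum_add_distrib, sum_sub_distrib, ← mul_sum]

theorem moveMass_nonneg (hx : 0 ≤ x) (hij : i ≠ j) : 0 ≤ moveMass x i j := fun c => by
  rw [moveMass_apply hij]
  split_ifs
  exacts [le_rfl, add_nonneg (hx i) (hx j), hx c]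

theorem moveMass_rpow_le (hx : 0 ≤ x) (hij : i ≠ j) {θ : ℝ} (hθ : 1 ≤ θ) :
    moveMass (fun c => x c ^ θ) i j ≤ fun c => moveMass x i j c ^ θ := fun c => by
  simp only [moveMass_apply hij]
  split_ifs
  · rw [Real.zero_rpow (by linarith)]
  · exact Real.add_rpow_le_rpow_add (hx i) (hx j) hθ
  · rfl

end moveMass

namespace SimpleGraph

variable {V : Type*} [Fintype V] (G : SimpleGraph V) [DecidableRel G.Adj]

noncomputable def adjForm (w : V → ℝ) : ℝ := w ⬝ᵥ G.adjMatrix ℝ *ᵥ w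

variable {G}

theorem adjForm_eq_sum (w : V → ℝ) :
    G.adjForm w = ∑ a, ∑ b, if G.Adj a b then w a * w b else 0 := by
  simp [adjForm, dotProduct, mulVec, adjMatrix_apply, mul_sum, mul_comm]

theorem adjForm_add (w d : V → ℝ) :
    G.adjForm (w + d) = G.adjForm w + 2 * (d ⬝ᵥ G.adjMatrix ℝ *ᵥ w) + G.adjForm d := by
  have hsymm : w ⬝ᵥ G.adjMatrix ℝ *ᵥ d = d ⬝ᵥ G.adjMatrix ℝ *ᵥ w := by
    rw [dotProduct_mulVec, ← mulVec_transpose, transpose_adjMatrix, dotProduct_comm]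
  simp only [adjForm, add_dotProduct, dotProduct_add, mulVec_add, hsymm]
  ring

theorem adjForm_mono {w u : V → ℝ} (hw : 0 ≤ w) (hwu : w ≤ u) :
    G.adjForm w ≤ G.adjForm u := by
  simp only [adjForm_eq_sum]
  gcongr with a _ b _
  split_ifs
  · exact mul_le_mul (hwu a) (hwu b) (hw b) ((hw a).trans (hwu a))
  · rfl

theorem adjForm_nonneg {w : V → ℝ} (hw : 0 ≤ w) : 0 ≤ G.adjForm w := by
  simpa [adjForm] using G.adjForm_mono le_rfl hw

theorem adjForm_le_adjForm_of_le {H : SimpleGraph V} [DecidableRel H.Adj] (hGH : G ≤ H)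
    {w : V → ℝ} (hw : 0 ≤ w) : G.adjForm w ≤ H.adjForm w := by
  simp only [adjForm_eq_sum]
  gcongr with a _ b _
  split_ifs with hG hH hH
  · rfl
  · exact absurd (hGH hG) hH
  · exact mul_nonneg (hw a) (hw b)
  · rfl

theorem adjForm_top [DecidableEq V] (w : V → ℝ) :
    (⊤ : SimpleGraph V).adjForm w = (∑ a, w a) ^ 2 - ∑ a, w a ^ 2 := by
  have h (a b : V) :
      (if a = b then 0 else w a * w b) = w a * w b - if a = b then w a * w b else 0 := by
    split_ifs <;> ring
  simp [adjForm_eq_sum, ite_not, h, sum_sub_distrib, sq, sum_mul_sum]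

theorem adjForm_eq_zero_of_not_adj {i j : V} (hij : ¬ G.Adj i j) {d : V → ℝ}
    (hd : ∀ c, c ≠ i → c ≠ j → d c = 0) : G.adjForm d = 0 := by
  have mem (c : V) (hc : d c ≠ 0) : c = i ∨ c = j := by
    by_contra h
    rw [not_or] at h
    exact hc (hd c h.1 h.2)
  rw [adjForm_eq_sum]
  refine Fintype.sum_eq_zero _ fun a => Fintype.sum_eq_zero _ fun b => ?_
  refine ite_eq_right_iff.2 fun hab => ?_
  by_contra hne
  obtain ⟨ha, hb⟩ := mul_ne_zero_iff.1 hne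
  rcases mem a ha with rfl | rfl <;> rcases mem b hb with rfl | rfl
  exacts [G.irrefl hab, hij hab, hij hab.symm, G.irrefl hab]

theorem adjForm_moveMass [DecidableEq V] {i j : V} (hnadj : ¬ G.Adj i j) (w : V → ℝ) :
    G.adjForm (moveMass w i j) =
      G.adjForm w + 2 * w i * ((G.adjMatrix ℝ *ᵥ w) j - (G.adjMatrix ℝ *ᵥ w) i) := by
  have hd : G.adjForm (w i • (Pi.single j 1 - Pi.single i 1)) = 0 :=
    adjForm_eq_zero_of_not_adj hnadj fun c hci hcj => by simp [hci, hcj]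
  rw [moveMass, adjForm_add, hd, smul_dotProduct, sub_dotProduct, single_one_dotProduct,
    single_one_dotProduct, smul_eq_mul]
  ring

end SimpleGraph

theorem exists_fin_sum_comp_eq {V : Type*} [Fintype V] {s : Finset V} {k : ℕ} (hs : s.card ≤ k)
    {u : V → ℝ} (hu : ∀ a ∉ s, u a = 0) :
    ∃ w : Fin k → ℝ, ∀ g : ℝ → ℝ, g 0 = 0 → ∑ j, g (w j) = ∑ a, g (u a) := by
  let e : s ↪ Fin k := s.equivFin.toEmbedding.trans (Fin.castLEEmb hs)
  refine ⟨Function.extend e (fun a => u a) 0, fun g hg => ?_⟩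
  calc ∑ j, g (Function.extend e (fun a => u a) 0 j)
      = ∑ a : s, g (u a) := by
        refine (Fintype.sum_of_injective e e.injective _ _ (fun j hj => ?_) fun a => ?_).symm
        · rw [Function.extend_apply' _ _ _ (by simpa using hj), Pi.zero_apply, hg]
        · rw [e.injective.extend_apply]
    _ = ∑ a ∈ s, g (u a) := sum_coe_sort s fun a => g (u a)
    _ = ∑ a, g (u a) := sum_subset (subset_univ s) fun a _ ha => by rw [hu a ha, hg]

theorem phiVar_nonneg (θ : ℝ) (k : ℕ) : 0 ≤ phiVar θ k :=
  Real.iSup_nonneg fun _ => sum_nonneg fun _ _ => sum_nonneg fun _ _ => by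
    split_ifs
    exacts [by positivity, le_rfl]

theorem adjForm_top_le_phiVar {θ : ℝ} (hθ : 0 ≤ θ) {k : ℕ} {w : Fin k → ℝ}
    (hw : ∑ i, |w i| = 1) :
    (⊤ : SimpleGraph (Fin k)).adjForm (fun i => |w i| ^ θ) ≤ phiVar θ k := by
  have hform (v : Fin k → ℝ) : (⊤ : SimpleGraph (Fin k)).adjForm (fun i => |v i| ^ θ) =
      ∑ i, ∑ j, if i ≠ j then |v i| ^ θ * |v j| ^ θ else 0 := by
    simp [SimpleGraph.adjForm_eq_sum]
  rw [hform, phiVar]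
  refine le_ciSup (f := fun v : {v : Fin k → ℝ // ∑ i, |v i| = 1} =>
    ∑ i, ∑ j, if i ≠ j then |v.1 i| ^ θ * |v.1 j| ^ θ else 0) ⟨k ^ 2, ?_⟩ ⟨w, hw⟩
  rintro _ ⟨v, rfl⟩
  have hle (i : Fin k) : |v.1 i| ^ θ ≤ 1 := Real.rpow_le_one (abs_nonneg _)
    ((single_le_sum (fun j _ => abs_nonneg (v.1 j)) (mem_univ i)).trans_eq v.2) hθ
  calc _ ≤ ∑ _i : Fin k, ∑ _j : Fin k, (1 : ℝ) :=
        sum_le_sum fun i _ => sum_le_sum fun j _ => by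
          split_ifs
          exacts [mul_le_one₀ (hle i) (by positivity) (hle j), zero_le_one]
    _ = k ^ 2 := by simp [sq]

theorem adjForm_top_le_phiVar_of_card_le {V : Type*} [Fintype V] [DecidableEq V] {θ : ℝ}
    (hθ : 0 < θ) {s : Finset V} {k : ℕ} (hs : s.card ≤ k) {u : V → ℝ} (hu : ∀ a ∉ s, u a = 0)
    (hu1 : ∑ a, |u a| = 1) :
    (⊤ : SimpleGraph V).adjForm (fun a => |u a| ^ θ) ≤ phiVar θ k := by
  obtain ⟨w, hw⟩ := exists_fin_sum_comp_eq hs hu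
  have h0 : (0 : ℝ) ^ θ = 0 := Real.zero_rpow hθ.ne'
  calc (⊤ : SimpleGraph V).adjForm (fun a => |u a| ^ θ)
      = (⊤ : SimpleGraph (Fin k)).adjForm (fun j => |w j| ^ θ) := by
        simp only [SimpleGraph.adjForm_top]
        rw [hw (fun t => |t| ^ θ) (by simp [h0]), hw (fun t => (|t| ^ θ) ^ 2) (by simp [h0])]
    _ ≤ phiVar θ k := adjForm_top_le_phiVar hθ.le (by rw [hw abs abs_zero, hu1])

namespace SimpleGraph

variable {V : Type*} [Fintype V] {G : SimpleGraph V} [DecidableRel G.Adj]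

theorem adjForm_rpow_le_phiVar {θ : ℝ} (hθ : 1 ≤ θ) {k : ℕ}
    (hG : ∀ s : Finset V, G.IsClique (s : Set V) → s.card ≤ k) {v : V → ℝ} (hv : 0 ≤ v)
    (hv1 : ∑ a, v a = 1) : G.adjForm (fun a => v a ^ θ) ≤ phiVar θ k := by
  classical
  suffices ∀ s : Finset V, ∀ v : V → ℝ, 0 ≤ v → ∑ a, v a = 1 → (∀ a ∉ s, v a = 0) →
      G.adjForm (fun a => v a ^ θ) ≤ phiVar θ k from this univ v hv hv1 (by simp)
  intro s
  induction s using Finset.strongInduction with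
  | H s ih =>
  intro v hv hv1 hvs
  by_cases hs : G.IsClique (s : Set V)
  · have habs : ∀ a, |v a| = v a := fun a => abs_of_nonneg (hv a)
    calc G.adjForm (fun a => v a ^ θ) ≤ (⊤ : SimpleGraph V).adjForm (fun a => v a ^ θ) :=
          adjForm_le_adjForm_of_le le_top fun a => Real.rpow_nonneg (hv a) θ
      _ ≤ phiVar θ k := by
          simpa only [habs] using
            adjForm_top_le_phiVar_of_card_le (by linarith) (hG s hs) hvs (by simpa only [habs])
  obtain ⟨i, hi, j, hj, hij, hnadj⟩ : ∃ i ∈ s, ∃ j ∈ s, i ≠ j ∧ ¬ G.Adj i j := by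
    simpa [isClique_iff, Set.Pairwise] using hs
  set w := fun a => v a ^ θ
  wlog hN : (G.adjMatrix ℝ *ᵥ w) i ≤ (G.adjMatrix ℝ *ᵥ w) j generalizing i j with H
  · exact H j hj i hi hij.symm (fun h => hnadj h.symm) (le_of_not_ge hN)
  have hwi : 0 ≤ w i := Real.rpow_nonneg (hv i) θ
  calc G.adjForm w ≤ G.adjForm (moveMass w i j) := by
        rw [adjForm_moveMass hnadj]
        nlinarith
    _ ≤ G.adjForm (fun a => moveMass v i j a ^ θ) :=
        adjForm_mono (moveMass_nonneg (fun a => Real.rpow_nonneg (hv a) θ) hij)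
          (moveMass_rpow_le hv hij hθ)
    _ ≤ phiVar θ k := by
        refine ih (s.erase i) (erase_ssubset hi) _ (moveMass_nonneg hv hij)
          (by rw [sum_moveMass, hv1]) fun c hc => ?_
        rw [moveMass_apply hij]
        split_ifs with hci hcj
        · rfl
        · exact absurd (mem_erase.2 ⟨hcj ▸ hij.symm, hcj ▸ hj⟩) hc
        · exact hvs c fun hcs => hc (mem_erase.2 ⟨hci, hcs⟩)

theorem dotProduct_mulVec_le_adjForm_mul {p q : ℝ} (hpq : p.HolderConjugate q)
    {A : Matrix V V ℝ} (hA : ∀ a b, ¬ G.Adj a b → A a b = 0) (x : V → ℝ) :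
    x ⬝ᵥ A *ᵥ x ≤
      G.adjForm (fun a => |x a| ^ q) ^ (1 / q) * (∑ a, ∑ b, |A a b| ^ p) ^ (1 / p) := by
  let g : V × V → ℝ := fun ab => if G.Adj ab.1 ab.2 then x ab.1 * x ab.2 else 0
  have hxAx : x ⬝ᵥ A *ᵥ x = ∑ ab : V × V, g ab * A ab.1 ab.2 := by
    rw [Fintype.sum_prod_type]
    simp only [dotProduct, mulVec, mul_sum]
    refine sum_congr rfl fun a _ => sum_congr rfl fun b _ => ?_
    by_cases hab : G.Adj a b
    · simp only [g, if_pos hab]; ring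
    · simp [g, hab, hA a b hab]
  have hg : ∑ ab : V × V, |g ab| ^ q = G.adjForm (fun a => |x a| ^ q) := by
    rw [adjForm_eq_sum, Fintype.sum_prod_type]
    refine sum_congr rfl fun a _ => sum_congr rfl fun b _ => ?_
    by_cases hab : G.Adj a b
    · simp only [g, if_pos hab, abs_mul, Real.mul_rpow (abs_nonneg _) (abs_nonneg _)]
    · simp [g, hab, Real.zero_rpow hpq.symm.pos.ne']
  rw [hxAx, ← hg, ← Fintype.sum_prod_type' (fun a b => |A a b| ^ p)]
  exact Real.inner_le_Lp_mul_Lq _ _ _ hpq.symm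

end SimpleGraph

theorem largest_eigenvalue_le_phi_mul_Lp_norm_general {n : ℕ}
    (p : ℝ) (hp1 : 1 < p) (hp2 : p < 2)
    (k : ℕ)
    (G : SimpleGraph (Fin n))
    (A : Matrix (Fin n) (Fin n) ℝ) (hA : A.IsHermitian)
    (hsupp : ∀ i j, ¬ G.Adj i j → A i j = 0)
    (hclique_max : ∀ s : Finset (Fin n), G.IsClique (s : Set (Fin n)) → s.card ≤ k) :
    (⨆ l, hA.eigenvalues l) ≤
      phiVar (p / (2 * (p - 1))) k ^ ((p - 1) / p) *
        (∑ i, ∑ j, |A i j| ^ p) ^ (1 / p) := by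
  classical
  set q := p / (p - 1) with hq
  have hpq : p.HolderConjugate q := .conjExponent hp1
  have hθ : p / (2 * (p - 1)) = q / 2 := by rw [hq]; field_simp
  have hexp : (p - 1) / p = 1 / q := by rw [hq]; field_simp
  have hq2 : 2 ≤ q := by rw [hq, le_div_iff₀ (by linarith)]; linarith
  rw [hθ, hexp]
  refine Real.iSup_le (fun l => ?_) (by have := phiVar_nonneg (q / 2) k; positivity)
  set x := ⇑(hA.eigenvectorBasis l)
  have hx : ∑ a, x a ^ 2 = 1 := by
    rw [← EuclideanSpace.real_norm_sq_eq, hA.eigenvectorBasis.orthonormal.1 l, one_pow]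
  have hxq : G.adjForm (fun a => |x a| ^ q) ≤ phiVar (q / 2) k := by
    have hpow (a : Fin n) : |x a| ^ q = (x a ^ 2) ^ (q / 2) := by
      rw [← sq_abs, ← Real.rpow_natCast, ← Real.rpow_mul (abs_nonneg _)]
      ring_nf
    simp only [hpow]
    exact G.adjForm_rpow_le_phiVar (by linarith) hclique_max (fun a => sq_nonneg _) hx
  calc hA.eigenvalues l = x ⬝ᵥ A *ᵥ x := by simpa using hA.eigenvalues_eq l
    _ ≤ G.adjForm (fun a => |x a| ^ q) ^ (1 / q) * (∑ i, ∑ j, |A i j| ^ p) ^ (1 / p) :=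
        G.dotProduct_mulVec_le_adjForm_mul hpq hsupp x
    _ ≤ _ := by
        gcongr
        exact G.adjForm_nonneg fun a => by positivity

/-- For a symmetric conductance matrix `A` of a network on `n` vertices whose underlying
graph has maximum clique size `k`, and `1 < p < 2`,
`λ₁(A) ≤ φ_{p/(2(p-1))}(k)^{(p-1)/p} ⬝ ‖A‖_p`. -/
theorem largest_eigenvalue_le_phi_mul_Lp_norm {n : ℕ}
    (p : ℝ) (hp1 : 1 < p) (hp2 : p < 2)
    (k : ℕ) (hk : 2 ≤ k)
    (G : SimpleGraph (Fin n))
    (A : Matrix (Fin n) (Fin n) ℝ) (hA : A.IsHermitian)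
    (hsupp : ∀ i j, ¬ G.Adj i j → A i j = 0)
    (hclique_ex : ∃ s : Finset (Fin n), G.IsNClique k s)
    (hclique_max : ∀ s : Finset (Fin n), G.IsClique (s : Set (Fin n)) → s.card ≤ k) :
    (⨆ l, hA.eigenvalues l) ≤
      phiVar (p / (2 * (p - 1))) k ^ ((p - 1) / p) *
        (∑ i, ∑ j, |A i j| ^ p) ^ (1 / p) :=
  largest_eigenvalue_le_phi_mul_Lp_norm_general p hp1 hp2 k G A hA hsupp hclique_max
end

section
/- For a symmetric conductance matrix A of any network and 0 < p ≤ 1, the largest eigenvalue satisfies λ₁(A) ≤ 2^{-1/p} · ‖A‖_p. -/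
lemma aux_rpow_add_le (p a b : ℝ) (ha : 0 ≤ a) (hb : 0 ≤ b) (hp : 0 ≤ p) (hp1 : p ≤ 1) :
    (a + b) ^ p ≤ a ^ p + b ^ p := by
  have h := NNReal.rpow_add_le_add_rpow a.toNNReal b.toNNReal hp hp1
  have h' := NNReal.coe_le_coe.mpr h
  push_cast [NNReal.coe_rpow, Real.coe_toNNReal a ha, Real.coe_toNNReal b hb] at h'
  exact h'

lemma aux_sum_rpow {ι : Type*} (p : ℝ) (hp0 : 0 < p) (hp1 : p ≤ 1)
    (s : Finset ι) (f : ι → ℝ) (hf : ∀ i ∈ s, 0 ≤ f i) :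
    (∑ i ∈ s, f i) ^ p ≤ ∑ i ∈ s, f i ^ p := by
  classical
  induction s using Finset.cons_induction with
  | empty => simp [Real.zero_rpow hp0.ne']
  | cons a s ha ih =>
    rw [Finset.sum_cons, Finset.sum_cons]
    have h1 : (f a + ∑ i ∈ s, f i) ^ p ≤ f a ^ p + (∑ i ∈ s, f i) ^ p :=
      aux_rpow_add_le p _ _ (hf a (Finset.mem_cons_self a s))
        (Finset.sum_nonneg fun i hi => hf i (Finset.mem_cons_of_mem hi)) hp0.le hp1
    exact h1.trans (by gcongr; exact ih fun i hi => hf i (Finset.mem_cons_of_mem hi))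

lemma aux_sym_sum {n : ℕ} (g : Fin n → Fin n → ℝ)
    (hsym : ∀ i j, g j i = g i j) (hd : ∀ i, g i i = 0) :
    ∑ i, ∑ j, g i j =
      2 * ∑ q ∈ Finset.univ.filter (fun q : Fin n × Fin n => q.1 < q.2), g q.1 q.2 := by
  classical
  have h0 : ∑ i, ∑ j, g i j = ∑ q : Fin n × Fin n, g q.1 q.2 := by
    rw [← Finset.sum_product']
    rfl
  rw [h0, ← Finset.sum_filter_add_sum_filter_not Finset.univ (fun q : Fin n × Fin n => q.1 < q.2)]
  have h1 : ∑ q ∈ Finset.univ.filter (fun q : Fin n × Fin n => ¬ q.1 < q.2), g q.1 q.2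
      = ∑ q ∈ Finset.univ.filter (fun q : Fin n × Fin n => q.2 < q.1), g q.1 q.2 := by
    symm
    apply Finset.sum_subset
    · intro q hq
      simp only [Finset.mem_filter, Finset.mem_univ, true_and] at hq ⊢
      exact not_lt.mpr hq.le
    · intro q hq hq'
      simp only [Finset.mem_filter, Finset.mem_univ, true_and] at hq hq'
      have : q.1 = q.2 := le_antisymm (not_lt.mp hq') (not_lt.mp hq)
      rw [this, hd]
  have h2 : ∑ q ∈ Finset.univ.filter (fun q : Fin n × Fin n => q.2 < q.1), g q.1 q.2
      = ∑ q ∈ Finset.univ.filter (fun q : Fin n × Fin n => q.1 < q.2), g q.1 q.2 := by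
    apply Finset.sum_nbij' (fun q => Prod.swap q) (fun q => Prod.swap q) <;>
      simp [hsym]
  rw [h1, h2]; ring

lemma aux_eigen_le {n : ℕ} (A : Matrix (Fin n) (Fin n) ℝ) (hA : A.IsHermitian)
    (hdiag : ∀ i, A i i = 0) (l : Fin n) :
    hA.eigenvalues l ≤ (1/2) * ∑ i, ∑ j, |A i j| := by
  set v : Fin n → ℝ := ⇑(hA.eigenvectorBasis l) with hv
  have hnorm : ‖hA.eigenvectorBasis l‖ = 1 := hA.eigenvectorBasis.orthonormal.1 l
  have hsum : ∑ i, v i ^ 2 = 1 := by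
    have h2 : ‖hA.eigenvectorBasis l‖ ^ 2 = 1 := by rw [hnorm]; norm_num
    rw [EuclideanSpace.norm_eq, Real.sq_sqrt (by positivity)] at h2
    simpa [Real.norm_eq_abs, sq_abs] using h2
  have hEv : hA.eigenvalues l = ∑ i, v i * ∑ j, A i j * v j := by
    have h := hA.eigenvalues_eq l
    simpa [dotProduct, Matrix.mulVec, hv] using h
  rw [hEv]
  have key : ∀ i j, v i * (A i j * v j) ≤ |A i j| * (1/2) := by
    intro i j
    rcases eq_or_ne i j with rfl | hij
    · simp [hdiag i]
    · have h1 : v i * (A i j * v j) ≤ |A i j| * (|v i| * |v j|) := by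
        calc v i * (A i j * v j) ≤ |v i * (A i j * v j)| := le_abs_self _
        _ = |A i j| * (|v i| * |v j|) := by rw [abs_mul, abs_mul]; ring
      refine h1.trans (mul_le_mul_of_nonneg_left ?_ (abs_nonneg _))
      have h2 : 2 * (|v i| * |v j|) ≤ |v i| ^ 2 + |v j| ^ 2 := by
        nlinarith [sq_nonneg (|v i| - |v j|)]
      have h3 : v i ^ 2 + v j ^ 2 ≤ 1 := by
        rw [← hsum]
        have := Finset.sum_le_sum_of_subset_of_nonneg
          (Finset.subset_univ ({i, j} : Finset (Fin n)))
          (fun k _ _ => sq_nonneg (v k))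
        rwa [Finset.sum_insert (by simpa using hij), Finset.sum_singleton] at this
      rw [sq_abs, sq_abs] at h2
      linarith
  calc ∑ i, v i * ∑ j, A i j * v j = ∑ i, ∑ j, v i * (A i j * v j) := by
        simp [Finset.mul_sum]
    _ ≤ ∑ i : Fin n, ∑ j : Fin n, |A i j| * (1/2) :=
        Finset.sum_le_sum fun i _ => Finset.sum_le_sum fun j _ => key i j
    _ = (1/2) * ∑ i, ∑ j, |A i j| := by
        rw [Finset.mul_sum]
        exact Finset.sum_congr rfl fun i _ => by
          rw [Finset.mul_sum]; exact Finset.sum_congr rfl fun j _ => by ring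

/-- For a symmetric conductance matrix `A` (zero diagonal) and `0 < p ≤ 1`,
`λ₁(A) ≤ 2^{-1/p} ⬝ ‖A‖_p`. -/
theorem largest_eigenvalue_le_Lp_norm_small_p {n : ℕ}
    (p : ℝ) (hp0 : 0 < p) (hp1 : p ≤ 1)
    (A : Matrix (Fin n) (Fin n) ℝ) (hA : A.IsHermitian)
    (hdiag : ∀ i, A i i = 0) :
    (⨆ l, hA.eigenvalues l) ≤
      (2 : ℝ) ^ (-(1 / p)) * (∑ i, ∑ j, |A i j| ^ p) ^ (1 / p) := by
  classical
  have hAsym : ∀ i j : Fin n, A j i = A i j := by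
    intro i j
    have := hA.apply i j
    simpa using this
  set P := Finset.univ.filter (fun q : Fin n × Fin n => q.1 < q.2) with hP
  set S' : ℝ := ∑ q ∈ P, |A q.1 q.2| with hS'
  set T' : ℝ := ∑ q ∈ P, |A q.1 q.2| ^ p with hT'
  have hS'nn : 0 ≤ S' := Finset.sum_nonneg fun q _ => abs_nonneg _
  have hT'nn : 0 ≤ T' := Finset.sum_nonneg fun q _ =>
    Real.rpow_nonneg (abs_nonneg _) p
  have hT : ∑ i, ∑ j, |A i j| ^ p = 2 * T' := by
    apply aux_sym_sum (fun i j => |A i j| ^ p)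
    · intro i j; rw [hAsym i j]
    · intro i; rw [hdiag i, abs_zero, Real.zero_rpow hp0.ne']
  have hRHS : (2 : ℝ) ^ (-(1 / p)) * (∑ i, ∑ j, |A i j| ^ p) ^ (1 / p) = T' ^ (1 / p) := by
    rw [hT, Real.mul_rpow (by norm_num) hT'nn, ← mul_assoc,
      ← Real.rpow_add (by norm_num : (0:ℝ) < 2), neg_add_cancel, Real.rpow_zero, one_mul]
  rw [hRHS]
  -- bound each eigenvalue
  have key : ∀ l : Fin n, hA.eigenvalues l ≤ T' ^ (1 / p) := by
    intro l
    have h1 : hA.eigenvalues l ≤ (1/2) * ∑ i, ∑ j, |A i j| := aux_eigen_le A hA hdiag l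
    have hS : ∑ i, ∑ j, |A i j| = 2 * S' := by
      apply aux_sym_sum (fun i j => |A i j|)
      · intro i j; rw [hAsym i j]
      · intro i; rw [hdiag i, abs_zero]
    have h2 : (1/2 : ℝ) * ∑ i, ∑ j, |A i j| = S' := by rw [hS]; ring
    have h3 : S' ≤ T' ^ (1 / p) := by
      have h4 : S' ^ p ≤ T' := aux_sum_rpow p hp0 hp1 P _ (fun q _ => abs_nonneg _)
      have h5 : S' = (S' ^ p) ^ (1 / p) := by
        rw [← Real.rpow_mul hS'nn, mul_one_div, div_self hp0.ne', Real.rpow_one]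
      rw [h5]
      exact Real.rpow_le_rpow (Real.rpow_nonneg hS'nn p) h4 (by positivity)
    linarith
  rcases Nat.eq_zero_or_pos n with rfl | hn
  · rw [Real.iSup_of_isEmpty]
    exact Real.rpow_nonneg hT'nn _
  · have : Nonempty (Fin n) := ⟨⟨0, hn⟩⟩
    exact ciSup_le key
end

section
/- For θ > 1 and any integer k ≥ 2, φ_θ(k) ≤ ((2θ−2)/(2θ−1))^{2θ−2} − ((2θ−2)/(2θ−1))^{2θ−1}. -/
/-!
Write `t = ∑ |v i| ^ θ`; the double sum is `t ^ 2 - ∑ |v i| ^ (2θ)`. Hölder's inequality with the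
weights `|v i|`, which sum to `1`, interpolates `t` between the `ℓ¹` and `ℓ^{2θ}` sums:
`t ^ ((2θ - 1) / (θ - 1)) ≤ ∑ |v i| ^ (2θ)`. So with `x = t ^ (1 / (θ - 1))` the double sum is at
most `x ^ (2θ - 2) - x ^ (2θ - 1)`, and `x ↦ x ^ p - x ^ (p + 1)` is maximal at `x = p / (p + 1)`.
-/

open Real Finset

theorem rpow_sub_rpow_add_one_le {p x : ℝ} (hp : 0 < p) (hx : 0 ≤ x) :
    x ^ p - x ^ (p + 1) ≤ (p / (p + 1)) ^ p - (p / (p + 1)) ^ (p + 1) := by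
  set c := p / (p + 1)
  have hc : 0 < c := by positivity
  have hc1 : c ≤ 1 := (div_le_one (by linarith)).2 (by linarith)
  set y := x / c
  have hy : 0 ≤ y := by positivity
  have hxy : x = c * y := (mul_div_cancel₀ x hc.ne').symm
  -- Bernoulli's inequality: the tangent line of `z ↦ z ^ (1 / c)` at `c ^ p` has slope `1`.
  have bernoulli : y ^ p ≤ 1 + c * (y ^ (p + 1) - 1) := by
    have h := rpow_one_add_le_one_add_mul_self (s := y ^ (p + 1) - 1)
      (by linarith [rpow_nonneg hy (p + 1)]) hc.le hc1
    rwa [add_sub_cancel, ← rpow_mul hy, show (p + 1) * (p / (p + 1)) = p by field_simp] at h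
  rw [hxy, mul_rpow hc.le hy, mul_rpow hc.le hy, rpow_add_one hc.ne' p]
  nlinarith [rpow_nonneg hc.le p]

theorem rpow_sum_rpow_le_sum_rpow_of_sum_eq_one {ι : Type*} (s : Finset ι) {a : ι → ℝ}
    (ha : ∀ i, 0 ≤ a i) (hsum : ∑ i ∈ s, a i = 1) {θ η : ℝ} (hθ : 1 < θ) (hθη : θ ≤ η) :
    (∑ i ∈ s, a i ^ θ) ^ ((η - 1) / (θ - 1)) ≤ ∑ i ∈ s, a i ^ η := by
  set r := (η - 1) / (θ - 1)
  have hr : 1 ≤ r := (one_le_div (by linarith)).2 (by linarith)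
  have holder := inner_le_weight_mul_Lp_of_nonneg s hr a (fun i ↦ a i ^ (θ - 1)) ha
    (fun i ↦ rpow_nonneg (ha i) _)
  have hθ_pow : ∀ i, a i * a i ^ (θ - 1) = a i ^ θ := fun i ↦ by
    rw [← rpow_one_add' (ha i) (by linarith), add_sub_cancel]
  have hη_pow : ∀ i, a i * (a i ^ (θ - 1)) ^ r = a i ^ η := fun i ↦ by
    rw [← rpow_mul (ha i), mul_div_cancel₀ _ (by linarith : θ - 1 ≠ 0),
      ← rpow_one_add' (ha i) (by linarith), add_sub_cancel]
  simp only [hθ_pow, hη_pow, hsum, one_rpow, one_mul] at holder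
  calc (∑ i ∈ s, a i ^ θ) ^ r ≤ ((∑ i ∈ s, a i ^ η) ^ r⁻¹) ^ r :=
        rpow_le_rpow (sum_nonneg fun i _ ↦ rpow_nonneg (ha i) θ) holder (by linarith)
    _ = ∑ i ∈ s, a i ^ η :=
        rpow_inv_rpow (sum_nonneg fun i _ ↦ rpow_nonneg (ha i) η) (by linarith)

theorem sum_sum_ite_ne_mul {ι R : Type*} [Fintype ι] [DecidableEq ι] [CommRing R] (b : ι → R) :
    ∑ i, ∑ j, (if i ≠ j then b i * b j else 0) = (∑ i, b i) ^ 2 - ∑ i, b i ^ 2 := by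
  simp only [sq, sum_mul_sum, ← sum_sub_distrib]
  refine sum_congr rfl fun i _ ↦ ?_
  rw [← Fintype.sum_ite_eq i (fun j ↦ b i * b j), ← sum_sub_distrib]
  refine sum_congr rfl fun j _ ↦ ?_
  split_ifs <;> simp_all

theorem sum_sum_ite_ne_rpow_mul_rpow_le {ι : Type*} [Fintype ι] [DecidableEq ι] {a : ι → ℝ}
    (ha : ∀ i, 0 ≤ a i) (hsum : ∑ i, a i = 1) {θ : ℝ} (hθ : 1 < θ) :
    ∑ i, ∑ j, (if i ≠ j then a i ^ θ * a j ^ θ else 0) ≤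
      ((2 * θ - 2) / (2 * θ - 1)) ^ (2 * θ - 2) - ((2 * θ - 2) / (2 * θ - 1)) ^ (2 * θ - 1) := by
  set t := ∑ i, a i ^ θ
  have ht : 0 ≤ t := sum_nonneg fun i _ ↦ rpow_nonneg (ha i) θ
  have hθ' : θ - 1 ≠ 0 := by linarith
  set x := t ^ (θ - 1)⁻¹
  have ht_sq : t ^ 2 = x ^ (2 * θ - 2) := by
    rw [← rpow_mul ht, show (θ - 1)⁻¹ * (2 * θ - 2) = (2 : ℕ) by field_simp; norm_num,
      rpow_natCast]
  have hsum_sq : x ^ (2 * θ - 1) ≤ ∑ i, (a i ^ θ) ^ 2 := by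
    have hsq : ∀ i, (a i ^ θ) ^ 2 = a i ^ (2 * θ) := fun i ↦ by
      rw [← rpow_mul_natCast (ha i), mul_comm, Nat.cast_ofNat]
    rw [← rpow_mul ht, inv_mul_eq_div, sum_congr rfl fun i _ ↦ hsq i]
    exact rpow_sum_rpow_le_sum_rpow_of_sum_eq_one univ ha hsum hθ (η := 2 * θ) (by linarith)
  have hmax :=
    rpow_sub_rpow_add_one_le (p := 2 * θ - 2) (by linarith) (rpow_nonneg ht (θ - 1)⁻¹)
  rw [show 2 * θ - 2 + 1 = 2 * θ - 1 by ring] at hmax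
  calc ∑ i, ∑ j, (if i ≠ j then a i ^ θ * a j ^ θ else 0)
      = t ^ 2 - ∑ i, (a i ^ θ) ^ 2 := sum_sum_ite_ne_mul _
    _ ≤ x ^ (2 * θ - 2) - x ^ (2 * θ - 1) := by rw [ht_sq]; linarith
    _ ≤ _ := hmax

theorem phiVar_general_bound_general (θ : ℝ) (hθ : 1 < θ) (k : ℕ) :
    phiVar θ k ≤
      ((2 * θ - 2) / (2 * θ - 1)) ^ (2 * θ - 2) -
        ((2 * θ - 2) / (2 * θ - 1)) ^ (2 * θ - 1) := by
  refine Real.iSup_le (fun v ↦ sum_sum_ite_ne_rpow_mul_rpow_le (fun i ↦ abs_nonneg _) v.2 hθ) ?_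
  -- the bound is nonnegative, which covers the empty supremum at `k = 0`
  have h := rpow_sub_rpow_add_one_le (p := 2 * θ - 2) (x := 0) (by linarith) le_rfl
  rwa [zero_rpow (by linarith), zero_rpow (by linarith), sub_zero,
    show 2 * θ - 2 + 1 = 2 * θ - 1 by ring] at h

/-- For `θ > 1` and `k ≥ 2`,
`φ_θ(k) ≤ ((2θ−2)/(2θ−1))^{2θ−2} − ((2θ−2)/(2θ−1))^{2θ−1}`. -/
theorem phiVar_general_bound (θ : ℝ) (hθ : 1 < θ) (k : ℕ) (hk : 2 ≤ k) :
    phiVar θ k ≤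
      ((2 * θ - 2) / (2 * θ - 1)) ^ (2 * θ - 2) -
        ((2 * θ - 2) / (2 * θ - 1)) ^ (2 * θ - 1) :=
  phiVar_general_bound_general θ hθ k
end

section
/- For θ > 1 and any integer k with 2 ≤ k ≤ (2θ−1)/(2θ−2), one has φ_θ(k) = k^{-(2θ−2)} − k^{-(2θ−1)}, the maximum being attained at the uniform vector (1/k,…,1/k). -/
open Finset

lemma offsum {k : ℕ} (f : Fin k → Fin k → ℝ) :
    (∑ i : Fin k, ∑ j : Fin k, if i ≠ j then f i j else 0)
      = ∑ p ∈ ((univ ×ˢ univ).filter fun p : Fin k × Fin k => p.1 ≠ p.2), f p.1 p.2 := by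
  rw [Finset.sum_filter, Finset.sum_product]

lemma innersplit {k : ℕ} (i : Fin k) (f : Fin k → ℝ) :
    (∑ j : Fin k, if i ≠ j then f j else 0) = (∑ j : Fin k, f j) - f i := by
  have h : ∀ j : Fin k, (if i ≠ j then f j else 0) = f j - (if i = j then f j else 0) := by
    intro j; by_cases h : i = j <;> simp [h]
  rw [Finset.sum_congr rfl (fun j _ => h j), Finset.sum_sub_distrib, Finset.sum_ite_eq]
  simp

lemma diagsplit {k : ℕ} (f : Fin k → Fin k → ℝ) :
    (∑ p ∈ ((univ ×ˢ univ).filter fun p : Fin k × Fin k => p.1 ≠ p.2), f p.1 p.2)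
      = (∑ i : Fin k, ∑ j : Fin k, f i j) - ∑ i : Fin k, f i i := by
  rw [← offsum, ← Finset.sum_sub_distrib]
  exact Finset.sum_congr rfl fun i _ => innersplit i (f i)

set_option maxHeartbeats 2000000 in
lemma key_bound (θ : ℝ) (hθ : 1 < θ) (k : ℕ) (hk : 2 ≤ k)
    (hk' : (k : ℝ) ≤ (2 * θ - 1) / (2 * θ - 2)) (v : Fin k → ℝ)
    (hv : ∑ i, |v i| = 1) :
    (∑ i : Fin k, ∑ j : Fin k, if i ≠ j then |v i| ^ θ * |v j| ^ θ else 0)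
      ≤ (k : ℝ) ^ (-(2 * θ - 2)) - (k : ℝ) ^ (-(2 * θ - 1)) := by
  have hkR : (2:ℝ) ≤ (k:ℝ) := by exact_mod_cast hk
  have hk0 : (0:ℝ) < k := by linarith
  set a : Fin k → ℝ := fun i => |v i| with ha_def
  have ha : ∀ i, 0 ≤ a i := fun i => abs_nonneg _
  set β : ℝ := 2 * θ - 2 with hβ_def
  have hβ0 : 0 < β := by simp [hβ_def]; linarith
  have hβk : β * ((k:ℝ) - 1) ≤ 1 := by
    have h2 : (0:ℝ) < 2 * θ - 2 := by linarith
    have := (le_div_iff₀ h2).mp hk'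
    simp only [hβ_def]; nlinarith
  have hβ1 : β ≤ 1 := by nlinarith
  set α : ℝ := θ - 1 with hα_def
  have hα0 : 0 < α := by simp [hα_def]; linarith
  have hα1 : α < 1 := by simp only [hα_def]; linarith
  -- target rewriting
  have hT : (k : ℝ) ^ (-(2 * θ - 2)) - (k : ℝ) ^ (-(2 * θ - 1))
      = (k : ℝ) ^ (-β) * (1 - 1 / k) := by
    have h1 : (k : ℝ) ^ (-(2 * θ - 1)) = (k : ℝ) ^ (-β) * (k:ℝ)⁻¹ := by
      rw [show -(2 * θ - 1) = -β + (-1) by simp [hβ_def]; ring, Real.rpow_add hk0,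
        Real.rpow_neg_one]
    rw [h1]
    have : (k : ℝ) ^ (-(2 * θ - 2)) = (k:ℝ) ^ (-β) := by simp [hβ_def]
    rw [this]; field_simp
  rw [hT]
  -- basic sums
  set Q : ℝ := ∑ i, a i ^ 2 with hQ_def
  set P : ℝ := ∑ i, a i ^ 3 with hP_def
  set R : ℝ := ∑ i, a i ^ 4 with hR_def
  set D := (univ ×ˢ univ).filter fun p : Fin k × Fin k => p.1 ≠ p.2 with hD_def
  set u : Fin k × Fin k → ℝ := fun p => a p.1 * a p.2 with hu_def
  have hu : ∀ p, 0 ≤ u p := fun p => mul_nonneg (ha _) (ha _)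
  have hS : (∑ i : Fin k, ∑ j : Fin k, if i ≠ j then |v i| ^ θ * |v j| ^ θ else 0)
      = ∑ p ∈ D, (u p) ^ θ := by
    have h1 : ∀ i j : Fin k, |v i| ^ θ * |v j| ^ θ = (a i * a j) ^ θ := fun i j =>
      (Real.mul_rpow (ha i) (ha j)).symm
    simp_rw [h1]
    exact offsum (fun i j => (a i * a j) ^ θ)
  rw [hS]
  have hS1 : (∑ p ∈ D, u p) = 1 - Q := by
    rw [hD_def]
    rw [diagsplit (fun i j => a i * a j)]
    rw [← Finset.sum_mul_sum]
    rw [hv]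
    simp [hQ_def, sq]
  have hS2 : (∑ p ∈ D, (u p) ^ 2) = Q ^ 2 - R := by
    rw [hD_def]
    rw [diagsplit (fun i j => (a i * a j) ^ 2)]
    have : ∀ i j : Fin k, (a i * a j) ^ 2 = a i ^ 2 * a j ^ 2 := fun i j => mul_pow _ _ _
    simp_rw [this]
    rw [← Finset.sum_mul_sum]
    congr 1
    · rw [hQ_def]; ring
    · rw [hR_def]; congr 1; ext i; ring
  have hQ1 : 1 ≤ (k:ℝ) * Q := by
    have := Finset.sum_mul_sq_le_sq_mul_sq univ (fun _ => (1:ℝ)) a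
    simp only [one_mul, one_pow] at this
    rw [Finset.sum_const, Finset.card_univ, Fintype.card_fin] at this
    rw [hv] at this
    simpa [hQ_def] using this
  have hQ0 : 0 < Q := by nlinarith
  have hQle : Q ≤ 1 := by
    rw [← hv, hQ_def]
    apply Finset.sum_le_sum
    intro i _
    have hai : a i ≤ 1 := by
      rw [← hv]
      exact Finset.single_le_sum (fun j _ => ha j) (mem_univ i)
    nlinarith [ha i]
  -- Cauchy–Schwarz chain: Q^2 ≤ P, P^2 ≤ Q*R, hence Q^3 ≤ R
  set b : Fin k → ℝ := fun i => Real.sqrt (a i) with hb_def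
  have hb2 : ∀ i, b i ^ 2 = a i := fun i => Real.sq_sqrt (ha i)
  have hQP : Q ^ 2 ≤ P := by
    have h := Finset.sum_mul_sq_le_sq_mul_sq univ b (fun i => b i ^ 3)
    have e1 : ∀ i : Fin k, b i * b i ^ 3 = a i ^ 2 := by
      intro i; rw [show b i * b i ^ 3 = (b i ^ 2) ^ 2 by ring, hb2]
    have e2 : ∀ i : Fin k, (b i ^ 3) ^ 2 = a i ^ 3 := by
      intro i; rw [show (b i ^ 3) ^ 2 = (b i ^ 2) ^ 3 by ring, hb2]
    simp_rw [e1, e2, hb2] at h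
    rw [hv] at h
    simpa [hQ_def, hP_def] using h
  have hPR : P ^ 2 ≤ Q * R := by
    have h := Finset.sum_mul_sq_le_sq_mul_sq univ (fun i => b i ^ 2) (fun i => b i ^ 4)
    have e1 : ∀ i : Fin k, b i ^ 2 * b i ^ 4 = a i ^ 3 := by
      intro i; rw [show b i ^ 2 * b i ^ 4 = (b i ^ 2) ^ 3 by ring, hb2]
    have e2 : ∀ i : Fin k, (b i ^ 2) ^ 2 = a i ^ 2 := by intro i; rw [hb2]
    have e3 : ∀ i : Fin k, (b i ^ 4) ^ 2 = a i ^ 4 := by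
      intro i; rw [show (b i ^ 4) ^ 2 = (b i ^ 2) ^ 4 by ring, hb2]
    simp_rw [e1, e2, e3] at h
    simpa [hQ_def, hP_def, hR_def] using h
  have hR3 : Q ^ 3 ≤ R := by nlinarith [hQP, hPR, hQ0, sq_nonneg (P - Q ^ 2)]
  have hS1nn : 0 ≤ ∑ p ∈ D, u p := Finset.sum_nonneg fun p _ => hu p
  have hS2nn : 0 ≤ ∑ p ∈ D, (u p) ^ 2 := Finset.sum_nonneg fun p _ => sq_nonneg _
  have hTnn : (0:ℝ) ≤ (k : ℝ) ^ (-β) * (1 - 1 / k) := by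
    have h1k : (1:ℝ)/k ≤ 1 := by rw [div_le_one hk0]; linarith
    exact mul_nonneg (Real.rpow_nonneg hk0.le _) (by linarith)
  rcases eq_or_lt_of_le hS1nn with h0 | hS1pos
  · -- all off-diagonal products vanish
    have hz : ∀ p ∈ D, u p = 0 :=
      (Finset.sum_eq_zero_iff_of_nonneg fun p _ => hu p).mp h0.symm
    have : (∑ p ∈ D, (u p) ^ θ) = 0 := by
      apply Finset.sum_eq_zero
      intro p hp
      rw [hz p hp, Real.zero_rpow (by linarith)]
    rw [this]; exact hTnn
  have hS2pos : 0 < ∑ p ∈ D, (u p) ^ 2 := by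
    rcases eq_or_lt_of_le hS2nn with h0 | h; swap
    · exact h
    exfalso
    have hz : ∀ p ∈ D, (u p) ^ 2 = 0 :=
      (Finset.sum_eq_zero_iff_of_nonneg fun p _ => sq_nonneg _).mp h0.symm
    have : (∑ p ∈ D, u p) = 0 := by
      apply Finset.sum_eq_zero
      intro p hp
      exact pow_eq_zero_iff (n := 2) (by norm_num) |>.mp (hz p hp)
    linarith
  set S₁ : ℝ := ∑ p ∈ D, u p with hS₁_def
  set S₂ : ℝ := ∑ p ∈ D, (u p) ^ 2 with hS₂_def
  set C : ℝ := S₁ ^ (1 - α) * S₂ ^ α with hC_def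
  have hCpos : 0 < C := by
    have h1 := Real.rpow_pos_of_pos hS1pos (1 - α)
    have h2 := Real.rpow_pos_of_pos hS2pos α
    rw [hC_def]; exact mul_pos h1 h2
  have perterm : ∀ p ∈ D, (u p) ^ θ ≤ C * ((1 - α) * (u p / S₁) + α * ((u p) ^ 2 / S₂)) := by
    intro p _
    rcases eq_or_lt_of_le (hu p) with h0 | hpos
    · rw [← h0, Real.zero_rpow (by linarith)]
      have h1 : (0:ℝ) ≤ (1 - α) * (0 / S₁) + α * ((0:ℝ) ^ 2 / S₂) := by
        simp
      simpa [← h0] using mul_nonneg hCpos.le h1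

    · have hgm := Real.geom_mean_le_arith_mean2_weighted (w₁ := 1 - α) (w₂ := α)
        (p₁ := u p / S₁) (p₂ := (u p) ^ 2 / S₂) (by linarith) hα0.le
        (div_nonneg (hu p) hS1pos.le) (div_nonneg (sq_nonneg _) hS2pos.le) (by ring)
      have key : (u p / S₁) ^ (1 - α) * ((u p) ^ 2 / S₂) ^ α = (u p) ^ θ / C := by
        rw [Real.div_rpow (hu p) hS1pos.le, Real.div_rpow (sq_nonneg _) hS2pos.le]
        rw [div_mul_div_comm]
        congr 1
        rw [← Real.rpow_natCast (u p) 2, ← Real.rpow_mul (hu p),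
          ← Real.rpow_add hpos]
        congr 1
        push_cast
        simp [hα_def]; ring
      rw [key] at hgm
      calc (u p) ^ θ = C * ((u p) ^ θ / C) := by field_simp
        _ ≤ C * ((1 - α) * (u p / S₁) + α * ((u p) ^ 2 / S₂)) :=
            mul_le_mul_of_nonneg_left hgm hCpos.le
  have hsum : (∑ p ∈ D, (u p) ^ θ) ≤ C := by
    calc (∑ p ∈ D, (u p) ^ θ)
        ≤ ∑ p ∈ D, C * ((1 - α) * (u p / S₁) + α * ((u p) ^ 2 / S₂)) :=
          Finset.sum_le_sum perterm
      _ = C * ((1 - α) * (S₁ / S₁) + α * (S₂ / S₂)) := by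
          rw [← Finset.mul_sum]
          congr 1
          rw [Finset.sum_add_distrib]
          congr 1
          · rw [← Finset.mul_sum, ← Finset.sum_div]
          · rw [← Finset.mul_sum, ← Finset.sum_div]
      _ = C := by
          rw [div_self (ne_of_gt hS1pos), div_self (ne_of_gt hS2pos)]
          ring
  have hQlt1 : Q < 1 := by
    have h := hS1pos; rw [hS1] at h; linarith
  have hCle : C ≤ (1 - Q) * Q ^ β := by
    have hS2le : S₂ ≤ Q ^ 2 * (1 - Q) := by
      rw [hS2]
      nlinarith [hR3]
    have h1 : C ≤ S₁ ^ (1 - α) * (Q ^ 2 * (1 - Q)) ^ α := by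
      rw [hC_def]
      exact mul_le_mul_of_nonneg_left
        (Real.rpow_le_rpow hS2nn hS2le hα0.le)
        (Real.rpow_nonneg hS1nn _)
    have hS1eq : S₁ = 1 - Q := hS1
    have h2 : S₁ ^ (1 - α) * (Q ^ 2 * (1 - Q)) ^ α = (1 - Q) * Q ^ β := by
      rw [hS1eq]
      have h1Q : (0:ℝ) < 1 - Q := by linarith
      rw [Real.mul_rpow (by positivity) h1Q.le]
      rw [← Real.rpow_natCast Q 2, ← Real.rpow_mul hQ0.le]
      rw [show (1 - Q) ^ (1 - α) * (Q ^ ((2:ℕ) * α) * (1 - Q) ^ α)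
          = (Q ^ ((2:ℕ) * α)) * ((1 - Q) ^ (1 - α) * (1 - Q) ^ α) by ring]
      rw [← Real.rpow_add h1Q]
      norm_num
      rw [show ((2:ℝ) * α) = β by simp [hα_def, hβ_def]; ring]
      ring
    linarith [h2 ▸ h1]
  -- final step
  have final : (1 - Q) * Q ^ β ≤ (k : ℝ) ^ (-β) * (1 - 1 / k) := by
    have hQeq : Q ^ β = (k : ℝ) ^ (-β) * ((k : ℝ) * Q) ^ β := by
      rw [Real.rpow_neg hk0.le, ← Real.inv_rpow hk0.le,
        ← Real.mul_rpow (by positivity) (by positivity)]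
      congr 1
      field_simp
    have hbern : ((k : ℝ) * Q) ^ β ≤ 1 + β * ((k : ℝ) * Q - 1) := by
      have := Real.geom_mean_le_arith_mean2_weighted (w₁ := β) (w₂ := 1 - β)
        (p₁ := (k : ℝ) * Q) (p₂ := 1) hβ0.le (by linarith) (by positivity) zero_le_one
        (by ring)
      rw [Real.one_rpow, mul_one] at this
      linarith
    have hpoly : (1 - Q) * (1 + β * ((k : ℝ) * Q - 1)) ≤ 1 - 1 / k := by
      rw [show (1:ℝ) - 1 / k = ((k:ℝ) - 1) / k by field_simp, le_div_iff₀ hk0]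
      nlinarith [mul_nonneg (by linarith : (0:ℝ) ≤ (k:ℝ) * Q - 1)
          (by linarith : (0:ℝ) ≤ 1 - β * ((k:ℝ) - 1)),
        mul_nonneg hβ0.le (sq_nonneg ((k:ℝ) * Q - 1))]
    calc (1 - Q) * Q ^ β = (k : ℝ) ^ (-β) * ((1 - Q) * ((k : ℝ) * Q) ^ β) := by
          rw [hQeq]; ring
      _ ≤ (k : ℝ) ^ (-β) * ((1 - Q) * (1 + β * ((k : ℝ) * Q - 1))) := by
          apply mul_le_mul_of_nonneg_left _ (by positivity)
          exact mul_le_mul_of_nonneg_left hbern (by linarith)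
      _ ≤ (k : ℝ) ^ (-β) * (1 - 1 / k) :=
          mul_le_mul_of_nonneg_left hpoly (by positivity)
  linarith [hsum, hCle, final]

/-- For `θ > 1` and `2 ≤ k ≤ (2θ−1)/(2θ−2)`,
`φ_θ(k) = k^{-(2θ−2)} − k^{-(2θ−1)}`, the maximum being attained at the uniform
vector `(1/k, …, 1/k)`. -/
theorem phiVar_small_k (θ : ℝ) (hθ : 1 < θ) (k : ℕ) (hk : 2 ≤ k)
    (hk' : (k : ℝ) ≤ (2 * θ - 1) / (2 * θ - 2)) :
    phiVar θ k = (k : ℝ) ^ (-(2 * θ - 2)) - (k : ℝ) ^ (-(2 * θ - 1)) ∧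
    (∑ i : Fin k, ∑ j : Fin k,
        if i ≠ j then |(1 : ℝ) / k| ^ θ * |(1 : ℝ) / k| ^ θ else 0) = phiVar θ k := by
  have hkR : (2:ℝ) ≤ (k:ℝ) := by exact_mod_cast hk
  have hk0 : (0:ℝ) < k := by linarith
  set T := (k : ℝ) ^ (-(2 * θ - 2)) - (k : ℝ) ^ (-(2 * θ - 1)) with hT_def
  have hu0 : ∑ i : Fin k, |(fun _ : Fin k => (1:ℝ)/k) i| = 1 := by
    simp only [abs_of_nonneg (by positivity : (0:ℝ) ≤ 1/(k:ℝ)), Finset.sum_const,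
      Finset.card_univ, Fintype.card_fin, nsmul_eq_mul]
    field_simp
  set f : {v : Fin k → ℝ // ∑ i, |v i| = 1} → ℝ := fun z =>
    ∑ i : Fin k, ∑ j : Fin k, if i ≠ j then |z.1 i| ^ θ * |z.1 j| ^ θ else 0 with hf_def
  have hphi : phiVar θ k = ⨆ z, f z := rfl
  set w : {v : Fin k → ℝ // ∑ i, |v i| = 1} := ⟨fun _ => 1/k, hu0⟩ with hw_def
  haveI : Nonempty {v : Fin k → ℝ // ∑ i, |v i| = 1} := ⟨w⟩
  have hbound : ∀ z, f z ≤ T := fun z => key_bound θ hθ k hk hk' z.1 z.2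
  have hval : (∑ i : Fin k, ∑ j : Fin k,
      if i ≠ j then |(1 : ℝ) / k| ^ θ * |(1 : ℝ) / k| ^ θ else 0) = T := by
    set c := |(1 : ℝ) / (k:ℝ)| ^ θ * |(1 : ℝ) / (k:ℝ)| ^ θ with hc
    have h1 : ∀ i : Fin k, (∑ j : Fin k, if i ≠ j then c else 0) = (k:ℝ) * c - c := by
      intro i
      rw [innersplit i (fun _ => c)]
      simp [Finset.sum_const, Finset.card_univ, nsmul_eq_mul]
    rw [Finset.sum_congr rfl (fun i _ => h1 i), Finset.sum_const, Finset.card_univ,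
      Fintype.card_fin, nsmul_eq_mul]
    have habs : |(1 : ℝ) / (k:ℝ)| = (k:ℝ)⁻¹ := by
      rw [abs_of_nonneg (by positivity : (0:ℝ) ≤ 1/(k:ℝ)), one_div]
    have hcc : c = (k:ℝ) ^ (-(2*θ)) := by
      rw [hc, habs, Real.inv_rpow hk0.le, ← Real.rpow_neg hk0.le,
        ← Real.rpow_add hk0]
      congr 1; ring
    rw [hcc, hT_def]
    rw [show -(2*θ-2) = (2:ℝ) + -(2*θ) by ring, Real.rpow_add hk0]
    rw [show -(2*θ-1) = (1:ℝ) + -(2*θ) by ring, Real.rpow_add hk0]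
    rw [Real.rpow_one]
    rw [show ((k:ℝ) ^ (2:ℝ)) = (k:ℝ) * (k:ℝ) by
      rw [show (2:ℝ) = ((2:ℕ):ℝ) by norm_num, Real.rpow_natCast]; ring]
    ring
  have hle : phiVar θ k ≤ T := by
    rw [hphi]; exact ciSup_le hbound
  have hge : T ≤ phiVar θ k := by
    rw [hphi]
    have hb : BddAbove (Set.range f) := ⟨T, by rintro x ⟨z, rfl⟩; exact hbound z⟩
    have h2 := le_ciSup hb w
    have hfw : f w = T := hval
    linarith
  refine ⟨le_antisymm hle hge, ?_⟩
  rw [hval]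
  exact (le_antisymm hle hge).symm
end

section
/- For θ > 1, the function k ↦ φ_θ(k) is non-decreasing in k and is eventually constant: there exists K such that φ_θ(k) = φ_θ(K) for all k ≥ K. -/
open Finset

lemma offdiag_sum {k : ℕ} (a : Fin k → ℝ) :
    ∑ i : Fin k, ∑ j : Fin k, (if i ≠ j then a i * a j else 0)
      = (∑ i, a i) ^ 2 - ∑ i, (a i) ^ 2 := by
  have h : ∀ i : Fin k, ∑ j : Fin k, (if i ≠ j then a i * a j else 0)
      = a i * (∑ j, a j) - a i * a i := by
    intro i
    have h1 : ∀ j : Fin k, (if i ≠ j then a i * a j else 0)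
        = a i * a j - (if j = i then a i * a j else 0) := by
      intro j
      by_cases h : j = i
      · simp [h]
      · simp [h, Ne.symm h, fun hh : i = j => h hh.symm]
    rw [Finset.sum_congr rfl fun j _ => h1 j, Finset.sum_sub_distrib,
      Finset.sum_ite_eq' univ i (fun j => a i * a j), ← Finset.mul_sum]
    simp
  rw [Finset.sum_congr rfl fun i _ => h i, Finset.sum_sub_distrib, ← Finset.sum_mul]
  rw [sq]
  congr 1
  exact Finset.sum_congr rfl fun i _ => (sq (a i)).symm

lemma phi_bdd (θ : ℝ) (hθ : 0 ≤ θ) (k : ℕ) :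
    BddAbove (Set.range fun v : {v : Fin k → ℝ // ∑ i, |v i| = 1} =>
      ∑ i : Fin k, ∑ j : Fin k, if i ≠ j then |v.1 i| ^ θ * |v.1 j| ^ θ else 0) := by
  refine ⟨(k : ℝ) * k, ?_⟩
  rintro x ⟨v, rfl⟩
  have hle : ∀ i, |v.1 i| ≤ 1 := by
    intro i
    have := Finset.single_le_sum (f := fun j => |v.1 j|) (fun j _ => abs_nonneg _)
      (Finset.mem_univ i)
    rw [v.2] at this
    exact this
  have hterm : ∀ i j : Fin k, (if i ≠ j then |v.1 i| ^ θ * |v.1 j| ^ θ else 0) ≤ 1 := by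
    intro i j
    split
    · exact mul_le_one₀ (Real.rpow_le_one (abs_nonneg _) (hle i) hθ)
        (Real.rpow_nonneg (abs_nonneg _) _) (Real.rpow_le_one (abs_nonneg _) (hle j) hθ)
    · norm_num
  calc ∑ i : Fin k, ∑ j : Fin k, (if i ≠ j then |v.1 i| ^ θ * |v.1 j| ^ θ else 0)
      ≤ ∑ _i : Fin k, ∑ _j : Fin k, (1 : ℝ) :=
        Finset.sum_le_sum fun i _ => Finset.sum_le_sum fun j _ => hterm i j
    _ = (k : ℝ) * k := by simp [mul_comm]

lemma phi_nonempty (k : ℕ) (hk : 1 ≤ k) :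
    Nonempty {v : Fin k → ℝ // ∑ i, |v i| = 1} := by
  have : (0 : ℕ) < k := hk
  refine ⟨⟨fun i => if i = ⟨0, this⟩ then 1 else 0, ?_⟩⟩
  have : ∀ i : Fin k, |if i = ⟨0, this⟩ then (1:ℝ) else 0| = if i = ⟨0, this⟩ then 1 else 0 := by
    intro i; split <;> simp
  rw [Finset.sum_congr rfl fun i _ => this i, Finset.sum_ite_eq' univ]
  simp

lemma sum_ext {k l : ℕ} (h : k ≤ l) (v : Fin k → ℝ) (F : ℝ → ℝ) (hF : F 0 = 0) :
    ∑ j : Fin l, F (if hj : (j : ℕ) < k then v ⟨j, hj⟩ else 0) = ∑ i : Fin k, F (v i) := by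
  have key : ∑ i : Fin k, F (v i)
      = ∑ j ∈ Finset.univ.map (Fin.castLEEmb h),
          F (if hj : (j : ℕ) < k then v ⟨j, hj⟩ else 0) := by
    rw [Finset.sum_map]
    refine Finset.sum_congr rfl fun i _ => ?_
    have : ((Fin.castLEEmb h) i : ℕ) < k := i.isLt
    rw [dif_pos this]
    congr 1
  rw [key]
  refine (Finset.sum_subset (Finset.subset_univ _) ?_).symm
  intro j _ hj
  have : ¬ ((j : ℕ) < k) := by
    intro hlt
    exact hj (by simp [Finset.mem_map]; exact ⟨⟨(j:ℕ), hlt⟩, by simp [Fin.castLEEmb, Fin.ext_iff]⟩)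
  rw [dif_neg this, hF]

lemma phiVar_mono (θ : ℝ) (hθ : 1 < θ) {k l : ℕ} (hk : 1 ≤ k) (hkl : k ≤ l) :
    phiVar θ k ≤ phiVar θ l := by
  have hθ0 : (0:ℝ) ≤ θ := by linarith
  have hθne : θ ≠ 0 := by positivity
  have := phi_nonempty k hk
  refine ciSup_le fun v => ?_
  set w : Fin l → ℝ := fun j => if hj : (j : ℕ) < k then v.1 ⟨j, hj⟩ else 0 with hwdef
  have hWabs : ∑ j, |w j| = 1 := by
    rw [hwdef]
    rw [sum_ext hkl v.1 (fun x => |x|) (abs_zero)]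
    exact v.2
  have hF : (fun x : ℝ => |x| ^ θ) 0 = 0 := by simp [Real.zero_rpow hθne]
  have hF2 : (fun x : ℝ => (|x| ^ θ) ^ 2) 0 = 0 := by simp [Real.zero_rpow hθne]
  have hval : ∑ i : Fin l, ∑ j : Fin l, (if i ≠ j then |w i| ^ θ * |w j| ^ θ else 0)
      = ∑ i : Fin k, ∑ j : Fin k, (if i ≠ j then |v.1 i| ^ θ * |v.1 j| ^ θ else 0) := by
    rw [offdiag_sum (fun i => |w i| ^ θ), offdiag_sum (fun i => |v.1 i| ^ θ)]
    rw [hwdef, sum_ext hkl v.1 (fun x => |x| ^ θ) hF,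
      sum_ext hkl v.1 (fun x => (|x| ^ θ) ^ 2) hF2]
  calc ∑ i : Fin k, ∑ j : Fin k, (if i ≠ j then |v.1 i| ^ θ * |v.1 j| ^ θ else 0)
      = ∑ i : Fin l, ∑ j : Fin l, (if i ≠ j then |w i| ^ θ * |w j| ^ θ else 0) := hval.symm
    _ ≤ phiVar θ l := le_ciSup (phi_bdd θ hθ0 l) (⟨w, hWabs⟩ : {v : Fin l → ℝ // ∑ i, |v i| = 1})

lemma merge_step (θ : ℝ) (hθ : 1 < θ) (k : ℕ) (hk : 1 ≤ (θ - 1) * k) :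
    phiVar θ (k + 2) ≤ phiVar θ (k + 1) := by
  have hθ0 : (0:ℝ) ≤ θ := by linarith
  have hθne : θ ≠ 0 := by positivity
  have := phi_nonempty (k+2) (by omega)
  refine ciSup_le fun v => ?_
  set σ : Equiv.Perm (Fin (k+2)) := Tuple.sort (fun i => |v.1 i|) with hσ
  set u : Fin (k+2) → ℝ := fun i => |v.1 (σ i)| with hu
  have hu_nonneg : ∀ i, 0 ≤ u i := fun i => abs_nonneg _
  have hu_mono : Monotone u := Tuple.monotone_sort (fun i => |v.1 i|)
  have hu_sum : ∑ i, u i = 1 := by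
    rw [hu, Equiv.sum_comp σ (fun i => |v.1 i|)]
    exact v.2
  have hu01 : u 0 ≤ u 1 := hu_mono (by simp [Fin.le_def])
  have hu1j : ∀ j : Fin k, u 1 ≤ u j.succ.succ := by
    intro j
    refine hu_mono ?_
    simp [Fin.le_def]
  have hSveq : ∑ i : Fin (k+2), ∑ j : Fin (k+2),
        (if i ≠ j then |v.1 i| ^ θ * |v.1 j| ^ θ else 0)
      = (∑ i, u i ^ θ) ^ 2 - ∑ i, (u i ^ θ) ^ 2 := by
    rw [offdiag_sum (fun i => |v.1 i| ^ θ),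
      ← Equiv.sum_comp σ (fun i => |v.1 i| ^ θ),
      ← Equiv.sum_comp σ (fun i => (|v.1 i| ^ θ) ^ 2)]
  rw [hSveq]
  clear_value σ
  clear hσ hSveq
  clear_value u
  clear hu
  -- the merged vector
  set w : Fin (k+1) → ℝ := Fin.cons (u 0 + u 1) (fun j : Fin k => u j.succ.succ) with hw
  have hw_nonneg : ∀ j, 0 ≤ w j := by
    refine Fin.cases ?_ ?_
    · rw [hw, Fin.cons_zero]; exact add_nonneg (hu_nonneg 0) (hu_nonneg 1)
    · intro j; rw [hw, Fin.cons_succ]; exact hu_nonneg _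
  have hw_abs : ∀ j, |w j| = w j := fun j => abs_of_nonneg (hw_nonneg j)
  have hsplit : ∀ F : ℝ → ℝ, ∑ i : Fin (k+2), F (u i)
      = F (u 0) + F (u 1) + ∑ j : Fin k, F (u j.succ.succ) := by
    intro F
    rw [Fin.sum_univ_succ (f := fun i => F (u i)),
      Fin.sum_univ_succ (f := fun i : Fin (k+1) => F (u i.succ))]
    rw [Fin.succ_zero_eq_one]
    ring
  have hwsplit : ∀ F : ℝ → ℝ, ∑ j : Fin (k+1), F (w j)
      = F (u 0 + u 1) + ∑ j : Fin k, F (u j.succ.succ) := by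
    intro F
    rw [Fin.sum_univ_succ (f := fun j => F (w j)), hw]
    simp only [Fin.cons_zero, Fin.cons_succ]
  have hw_sum : ∑ j, |w j| = 1 := by
    have h1 : ∑ j : Fin (k+1), |w j| = ∑ j : Fin (k+1), w j :=
      Finset.sum_congr rfl fun j _ => hw_abs j
    have h2 := hwsplit (fun x => x)
    have h3 := hsplit (fun x => x)
    rw [h3] at hu_sum
    rw [h1, h2]
    linarith
  clear_value w
  -- abbreviations
  set p := u 0 ^ θ with hp
  set q := u 1 ^ θ with hqdef
  set s := (u 0 + u 1) ^ θ with hs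
  set A := ∑ j : Fin k, u j.succ.succ ^ θ with hA
  set B := ∑ j : Fin k, (u j.succ.succ ^ θ) ^ 2 with hB
  have hSv : (∑ i, u i ^ θ) ^ 2 - ∑ i, (u i ^ θ) ^ 2
      = (p + q + A) ^ 2 - ((p^2 + q^2) + B) := by
    rw [hsplit (fun x => x ^ θ), hsplit (fun x => (x ^ θ)^2)]
  have hSw : ∑ i : Fin (k+1), ∑ j : Fin (k+1),
        (if i ≠ j then |w i| ^ θ * |w j| ^ θ else 0)
      = (s + A) ^ 2 - (s^2 + B) := by
    rw [offdiag_sum (fun i => |w i| ^ θ)]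
    have e1 : ∑ j : Fin (k+1), |w j| ^ θ = s + A := by
      rw [Finset.sum_congr rfl fun j _ => by rw [hw_abs j], hwsplit (fun x => x ^ θ)]
    have e2 : ∑ j : Fin (k+1), (|w j| ^ θ)^2 = s^2 + B := by
      rw [Finset.sum_congr rfl fun j _ => by rw [hw_abs j], hwsplit (fun x => (x ^ θ)^2)]
    rw [e1, e2]
  -- key inequality
  have hq0 : (0:ℝ) ≤ q := Real.rpow_nonneg (hu_nonneg 1) θ
  have hp0 : (0:ℝ) ≤ p := Real.rpow_nonneg (hu_nonneg 0) θ
  have hA0 : 0 ≤ A := Finset.sum_nonneg fun j _ => Real.rpow_nonneg (hu_nonneg _) θ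
  have key : p * q ≤ A * (s - p - q) := by
    rcases eq_or_lt_of_le (hu_nonneg 1) with hb | hb
    · have h0 : u 0 = 0 := le_antisymm (hb ▸ hu01) (hu_nonneg 0)
      have h1 : u 1 = 0 := hb.symm
      rw [hp, hqdef, hs, h0, h1]
      simp [Real.zero_rpow hθne]
    · set a := u 0 with ha'
      set b := u 1 with hb'
      have ha : 0 ≤ a := hu_nonneg 0
      have habn : (0:ℝ) ≤ a * b ^ (θ - 1) :=
        mul_nonneg ha (Real.rpow_nonneg hb.le _)
      have hAk : (k : ℝ) * b ^ θ ≤ A := by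
        rw [hA]
        calc (k : ℝ) * b ^ θ = ∑ _j : Fin k, b ^ θ := by
              rw [Finset.sum_const]; simp [mul_comm]
          _ ≤ ∑ j : Fin k, u j.succ.succ ^ θ :=
              Finset.sum_le_sum fun j _ =>
                Real.rpow_le_rpow hb.le (hu1j j) hθ0
      have hbern : b ^ θ + θ * (a * b ^ (θ - 1)) ≤ s := by
        have hdiv : (0:ℝ) ≤ a / b := div_nonneg ha hb.le
        have h1 : 1 + θ * (a / b) ≤ (1 + a / b) ^ θ :=
          one_add_mul_self_le_rpow_one_add (by linarith) hθ.le
        have h2 : ((1 + a / b) * b) ^ θ = (1 + a / b) ^ θ * b ^ θ :=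
          Real.mul_rpow (by linarith) hb.le
        have h3 : (1 + a / b) * b = a + b := by
          field_simp
          ring
        have h4 : b ^ (θ - 1) * b = b ^ θ := by
          rw [Real.rpow_sub hb, Real.rpow_one]
          field_simp
        have h5 : (1 + θ * (a / b)) * b ^ θ ≤ (1 + a / b) ^ θ * b ^ θ :=
          mul_le_mul_of_nonneg_right h1 (Real.rpow_nonneg hb.le θ)
        rw [← h2, h3] at h5
        have h6 : (1 + θ * (a / b)) * b ^ θ = b ^ θ + θ * (a * b ^ (θ - 1)) := by
          rw [← h4]
          field_simp
        rw [h6] at h5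
        rw [hs, ha', hb']
        exact h5
      have hpa : p ≤ a * b ^ (θ - 1) := by
        rcases eq_or_lt_of_le ha with ha0 | ha0
        · rw [hp, ← ha0, Real.zero_rpow hθne, zero_mul]
        · have hsplit2 : a ^ θ = a * a ^ (θ - 1) := by
            have h := Real.rpow_add ha0 1 (θ - 1)
            rw [Real.rpow_one] at h
            rw [show (1:ℝ) + (θ - 1) = θ by ring] at h
            rw [h]
          rw [hp, hsplit2]
          exact mul_le_mul_of_nonneg_left
            (Real.rpow_le_rpow ha hu01 (by linarith)) ha
      have hΔ : (θ - 1) * (a * b ^ (θ - 1)) ≤ s - p - q := by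
        have hqb : q = b ^ θ := by rw [hqdef, hb']
        nlinarith [hpa, hbern]
      have hΔ0 : 0 ≤ s - p - q :=
        le_trans (mul_nonneg (by linarith) habn) hΔ
      have hkb0 : (0:ℝ) ≤ (k : ℝ) * b ^ θ :=
        mul_nonneg (Nat.cast_nonneg k) (Real.rpow_nonneg hb.le θ)
      have hqb : q = b ^ θ := by rw [hqdef, hb']
      calc p * q ≤ (a * b ^ (θ - 1)) * q :=
            mul_le_mul_of_nonneg_right hpa hq0
        _ ≤ ((θ - 1) * k) * ((a * b ^ (θ - 1)) * q) :=
            le_mul_of_one_le_left (mul_nonneg habn hq0) hk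
        _ = ((θ - 1) * (a * b ^ (θ - 1))) * ((k : ℝ) * q) := by ring
        _ ≤ (s - p - q) * A := by
            rw [hqb]
            exact mul_le_mul hΔ hAk hkb0 hΔ0
        _ = A * (s - p - q) := by ring
  calc (∑ i, u i ^ θ) ^ 2 - ∑ i, (u i ^ θ) ^ 2
      = (p + q + A) ^ 2 - ((p^2 + q^2) + B) := hSv
    _ ≤ (s + A) ^ 2 - (s^2 + B) := by nlinarith [key]
    _ = ∑ i : Fin (k+1), ∑ j : Fin (k+1),
        (if i ≠ j then |w i| ^ θ * |w j| ^ θ else 0) := hSw.symm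
    _ ≤ phiVar θ (k+1) := le_ciSup (phi_bdd θ hθ0 (k+1)) ⟨w, hw_sum⟩

/-- For `θ > 1`, `k ↦ φ_θ(k)` is non-decreasing (on `k ≥ 2`) and eventually constant. -/
theorem phiVar_monotone_eventually_const (θ : ℝ) (hθ : 1 < θ) :
    (∀ k l : ℕ, 2 ≤ k → k ≤ l → phiVar θ k ≤ phiVar θ l) ∧
    (∃ K : ℕ, 2 ≤ K ∧ ∀ k : ℕ, K ≤ k → phiVar θ k = phiVar θ K) := by
  have hθ1 : (0:ℝ) < θ - 1 := by linarith
  constructor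
  · intro k l hk hkl
    exact phiVar_mono θ hθ (by omega) hkl
  · refine ⟨2 + ⌈(θ - 1)⁻¹⌉₊, Nat.le_add_right 2 _, ?_⟩
    set K := 2 + ⌈(θ - 1)⁻¹⌉₊ with hK
    have key : ∀ k : ℕ, K ≤ k → phiVar θ (k + 1) ≤ phiVar θ k := by
      intro k hk
      obtain ⟨m, rfl⟩ : ∃ m, k = m + 1 := ⟨k - 1, by omega⟩
      have hm : ((θ - 1)⁻¹ : ℝ) ≤ m := by
        refine le_trans (Nat.le_ceil _) ?_
        exact_mod_cast Nat.cast_le.mpr (show ⌈(θ - 1)⁻¹⌉₊ ≤ m by omega)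
      have h1 : 1 ≤ (θ - 1) * m := by
        have := mul_le_mul_of_nonneg_left hm hθ1.le
        rwa [mul_inv_cancel₀ hθ1.ne'] at this
      exact merge_step θ hθ m h1
    intro k hk
    induction k, hk using Nat.le_induction with
    | base => rfl
    | succ n hn ih =>
      refine le_antisymm ((key n hn).trans_eq ih) ?_
      rw [← ih]
      exact phiVar_mono θ hθ (by omega) (Nat.le_succ n)
end

section
/- Let G be a tree on vertex set [n], let s, ξ > 0 and θ ≥ 1, and let f = (f₁,…,f_n) satisfy Σ f_i = s and 0 ≤ f_i ≤ ξ for all i. Then Σ_{i<j, i∼j} f_i^θ f_j^θ ≤ s^{2θ}/4 if s < 2ξ, and Σ_{i<j, i∼j} f_i^θ f_j^θ ≤ ξ^θ (s − ξ)^θ if s ≥ 2ξ. -/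
/-!
Orient every edge of the tree away from a vertex `r` at which `f` is maximal. An edge is then
determined by its endpoint farther from `r` (paths in a tree are unique), and that endpoint is never
`r`. Writing `a i = f i ^ θ`, the edge sum is therefore at most `a r * (∑ a - a r)`.
If `s < 2ξ`, this is at most `(∑ a)² / 4 ≤ s ^ (2θ) / 4`, as `∑ a ≤ (∑ f) ^ θ` for `θ ≥ 1`.
If `s ≥ 2ξ`, then `a r ≤ ξ ^ θ` and `∑ a ≤ ξ ^ (θ - 1) * s`, the latter being at least `2 ξ ^ θ`.
Since `M (C - M)` increases in `M` while `M ≤ C / 2`, the bound becomes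
`ξ ^ θ * ξ ^ (θ - 1) * (s - ξ) ≤ ξ ^ θ * (s - ξ) ^ θ`.
-/

open Finset

namespace SimpleGraph

variable {V : Type*} {G : SimpleGraph V}

theorem IsAcyclic.eq_of_adj_of_dist_eq_add_one (hG : G.IsAcyclic) {r a b v : V}
    (ha : G.Adj a v) (hb : G.Adj b v) (hda : G.dist r v = G.dist r a + 1)
    (hdb : G.dist r v = G.dist r b + 1) : a = b := by
  have hrv : G.Reachable r v := Reachable.of_dist_ne_zero (by omega)
  obtain ⟨p, -, hp⟩ := (hrv.trans ha.symm.reachable).exists_path_of_dist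
  obtain ⟨q, -, hq⟩ := (hrv.trans hb.symm.reachable).exists_path_of_dist
  have hp' : (p.concat ha).IsPath := (p.concat ha).isPath_of_length_eq_dist (by simp [hp, hda])
  have hq' : (q.concat hb).IsPath := (q.concat hb).isPath_of_length_eq_dist (by simp [hq, hdb])
  have hpq : p.concat ha = q.concat hb :=
    congrArg Subtype.val ((hG.subsingleton_path r v).elim ⟨_, hp'⟩ ⟨_, hq'⟩)
  simpa using congrArg Walk.penultimate hpq

theorem IsTree.sum_adj_mul_le_mul_sum_sub [Fintype V] [LinearOrder V] [DecidableRel G.Adj]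
    {R : Type*} [CommRing R] [PartialOrder R] [IsOrderedRing R]
    (hG : G.IsTree) {g : V → R} (hg : ∀ i, 0 ≤ g i) {r : V} (hr : ∀ i, g i ≤ g r) :
    ∑ i, ∑ j, (if i < j ∧ G.Adj i j then g i * g j else 0) ≤ g r * (∑ i, g i - g r) := by
  classical
  set E := univ.filter fun p : V × V => p.1 < p.2 ∧ G.Adj p.1 p.2
  set far : V × V → V := fun p => if G.dist r p.1 < G.dist r p.2 then p.2 else p.1
  set near : V × V → V := fun p => if G.dist r p.1 < G.dist r p.2 then p.1 else p.2
  have hfar : ∀ p ∈ E, G.Adj (near p) (far p) ∧ G.dist r (far p) = G.dist r (near p) + 1 := by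
    intro p hp
    obtain ⟨-, -, hadj⟩ := mem_filter.1 hp
    rcases hG.dist_eq_dist_add_one_of_adj r hadj with h | h <;>
      simp [far, near, h, hadj, hadj.symm]
  have hinj : Set.InjOn far E := by
    intro p hp q hq hpq
    have hnear := hG.isAcyclic.eq_of_adj_of_dist_eq_add_one (hfar p hp).1
      (hpq ▸ (hfar q hq).1) (hfar p hp).2 (hpq ▸ (hfar q hq).2)
    have hp' := (mem_filter.1 hp).2.1
    have hq' := (mem_filter.1 hq).2.1
    -- `p` and `q` now share both endpoints, and `p.1 < p.2`, `q.1 < q.2` fix their order.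
    simp only [far, near] at hpq hnear
    split_ifs at hpq hnear <;> grind
  have hne : ∀ p ∈ E, far p ≠ r := fun p hp h => by simpa [h] using (hfar p hp).2
  calc ∑ i, ∑ j, (if i < j ∧ G.Adj i j then g i * g j else 0)
      = ∑ p ∈ E, g p.1 * g p.2 := by rw [sum_filter, ← univ_product_univ, sum_product]
    _ ≤ ∑ p ∈ E, g r * g (far p) := sum_le_sum fun p _ => by
        simp only [far]
        split_ifs
        · exact mul_le_mul_of_nonneg_right (hr _) (hg _)
        · exact (mul_comm _ _).trans_le (mul_le_mul_of_nonneg_right (hr _) (hg _))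
    _ = g r * ∑ v ∈ E.image far, g v := by rw [mul_sum, sum_image hinj]
    _ ≤ g r * ∑ v ∈ univ.erase r, g v := by
        refine mul_le_mul_of_nonneg_left
          (sum_le_sum_of_subset_of_nonneg ?_ fun v _ _ => hg v) (hg r)
        intro v hv
        obtain ⟨p, hp, rfl⟩ := mem_image.1 hv
        exact mem_erase.2 ⟨hne p hp, mem_univ _⟩
    _ = g r * (∑ i, g i - g r) := by rw [sum_erase_eq_sub (mem_univ r)]

end SimpleGraph

namespace Real

lemma rpow_sub_one_mul_self {x θ : ℝ} (hx : 0 ≤ x) (hθ : θ ≠ 0) :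
    x ^ (θ - 1) * x = x ^ θ := by
  rw [← rpow_add_one' hx (by rwa [sub_add_cancel]), sub_add_cancel]

lemma rpow_le_rpow_sub_one_mul {x c θ : ℝ} (hx : 0 ≤ x) (hxc : x ≤ c) (hθ : 1 ≤ θ) :
    x ^ θ ≤ c ^ (θ - 1) * x := by
  rw [← rpow_sub_one_mul_self hx (by linarith)]
  exact mul_le_mul_of_nonneg_right (rpow_le_rpow hx hxc (by linarith)) hx

lemma sum_rpow_le_rpow_sub_one_mul_sum {ι : Type*} (s : Finset ι) {f : ι → ℝ} {c θ : ℝ}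
    (hf : ∀ i ∈ s, 0 ≤ f i ∧ f i ≤ c) (hθ : 1 ≤ θ) :
    ∑ i ∈ s, f i ^ θ ≤ c ^ (θ - 1) * ∑ i ∈ s, f i := by
  rw [mul_sum]
  exact sum_le_sum fun i hi => rpow_le_rpow_sub_one_mul (hf i hi).1 (hf i hi).2 hθ

lemma sum_rpow_le_rpow_sum {ι : Type*} (s : Finset ι) {f : ι → ℝ} (hf : ∀ i ∈ s, 0 ≤ f i)
    {θ : ℝ} (hθ : 1 ≤ θ) : ∑ i ∈ s, f i ^ θ ≤ (∑ i ∈ s, f i) ^ θ := by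
  calc ∑ i ∈ s, f i ^ θ ≤ (∑ i ∈ s, f i) ^ (θ - 1) * ∑ i ∈ s, f i :=
        sum_rpow_le_rpow_sub_one_mul_sum s (fun i hi => ⟨hf i hi, single_le_sum hf hi⟩) hθ
    _ = (∑ i ∈ s, f i) ^ θ := rpow_sub_one_mul_self (sum_nonneg hf) (by linarith)

lemma rpow_sub_one_mul_le_rpow {c x θ : ℝ} (hc : 0 ≤ c) (hcx : c ≤ x) (hθ : 1 ≤ θ) :
    c ^ (θ - 1) * x ≤ x ^ θ := by
  rw [← rpow_sub_one_mul_self (hc.trans hcx) (by linarith)]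
  exact mul_le_mul_of_nonneg_right (rpow_le_rpow hc hcx (by linarith)) (hc.trans hcx)

end Real

lemma mul_sub_le_mul_sub_of_le {M m T C : ℝ} (hM : 0 ≤ M) (hMm : M ≤ m) (hTC : T ≤ C)
    (hmC : 2 * m ≤ C) : M * (T - M) ≤ m * (C - m) := by
  nlinarith

open Real

/-- Let `G` be a tree on `[n]`, `s, ξ > 0`, `θ ≥ 1`, and `f` with `∑ f i = s`,
`0 ≤ f i ≤ ξ`. Then `∑_{i<j, i∼j} (f i)^θ (f j)^θ ≤ s^{2θ}/4` if `s < 2ξ`, and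
`≤ ξ^θ (s−ξ)^θ` if `s ≥ 2ξ`. -/
theorem tree_sum_bound {n : ℕ} (G : SimpleGraph (Fin n)) [DecidableRel G.Adj]
    (hG : G.IsTree)
    (s ξ : ℝ) (hs : 0 < s) (hξ : 0 < ξ) (θ : ℝ) (hθ : 1 ≤ θ)
    (f : Fin n → ℝ) (hsum : ∑ i, f i = s)
    (hf : ∀ i, 0 ≤ f i ∧ f i ≤ ξ) :
    (s < 2 * ξ →
      (∑ i : Fin n, ∑ j : Fin n,
          if i < j ∧ G.Adj i j then f i ^ θ * f j ^ θ else 0) ≤ s ^ (2 * θ) / 4) ∧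
    (2 * ξ ≤ s →
      (∑ i : Fin n, ∑ j : Fin n,
          if i < j ∧ G.Adj i j then f i ^ θ * f j ^ θ else 0) ≤ ξ ^ θ * (s - ξ) ^ θ) := by
  obtain ⟨r, -, hr⟩ := exists_max_image univ f (univ_nonempty_iff.2 hG.connected.nonempty)
  set M := f r ^ θ
  set T := ∑ i, f i ^ θ
  have hM : 0 ≤ M := rpow_nonneg (hf r).1 θ
  have hedges := hG.sum_adj_mul_le_mul_sum_sub (fun i => rpow_nonneg (hf i).1 θ)
    fun i => rpow_le_rpow (hf i).1 (hr i (mem_univ i)) (by linarith)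
  constructor
  · intro _
    have hT : T ≤ s ^ θ := hsum ▸ sum_rpow_le_rpow_sum univ (fun i _ => (hf i).1) hθ
    calc _ ≤ M * (T - M) := hedges
      _ ≤ T ^ 2 / 4 := by nlinarith [four_mul_le_sq_add M (T - M)]
      _ ≤ (s ^ θ) ^ 2 / 4 := by gcongr; exact sum_nonneg fun i _ => rpow_nonneg (hf i).1 θ
      _ = s ^ (2 * θ) / 4 := by rw [mul_comm, rpow_mul hs.le, rpow_two]
  · intro h2ξ
    have hT : T ≤ ξ ^ (θ - 1) * s :=
      hsum ▸ sum_rpow_le_rpow_sub_one_mul_sum univ (fun i _ => hf i) hθ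
    have hξθ : 2 * ξ ^ θ ≤ ξ ^ (θ - 1) * s := by
      rw [← rpow_sub_one_mul_self hξ.le (by linarith), mul_left_comm]
      exact mul_le_mul_of_nonneg_left h2ξ (rpow_nonneg hξ.le _)
    calc _ ≤ M * (T - M) := hedges
      _ ≤ ξ ^ θ * (ξ ^ (θ - 1) * s - ξ ^ θ) :=
        mul_sub_le_mul_sub_of_le hM (rpow_le_rpow (hf r).1 (hf r).2 (by linarith)) hT hξθ
      _ = ξ ^ θ * (ξ ^ (θ - 1) * (s - ξ)) := by
        rw [mul_sub (ξ ^ (θ - 1)), rpow_sub_one_mul_self hξ.le (by linarith)]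
      _ ≤ ξ ^ θ * (s - ξ) ^ θ := by
        gcongr
        exact rpow_sub_one_mul_le_rpow hξ.le (by linarith) hθ
end

section
/- Let G be a tree on [n], 0 < ξ ≤ 1/2, θ ≥ 1, and f = (f₁,…,f_n) with Σ f_i² = 1 and 0 ≤ f_i ≤ ξ. Then Σ_{i<j, i∼j} f_i^{2θ} f_j^{2θ} ≤ ξ^{2θ}. -/
open SimpleGraph Walk Finset Real

/-- Let `G` be a tree on `[n]`, `0 < ξ ≤ 1/2`, `θ ≥ 1`, and `f` with `∑ f i ^ 2 = 1`,
`0 ≤ f i ≤ ξ`. Then `∑_{i<j, i∼j} (f i)^{2θ} (f j)^{2θ} ≤ ξ^{2θ}`. -/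
theorem tree_sum_bound_sq {n : ℕ} (G : SimpleGraph (Fin n)) [DecidableRel G.Adj]
    (hG : G.IsTree)
    (ξ : ℝ) (hξ0 : 0 < ξ) (hξ : ξ ≤ 1 / 2) (θ : ℝ) (hθ : 1 ≤ θ)
    (f : Fin n → ℝ) (hsum : ∑ i, (f i) ^ 2 = 1)
    (hf : ∀ i, 0 ≤ f i ∧ f i ≤ ξ) :
    (∑ i : Fin n, ∑ j : Fin n,
        if i < j ∧ G.Adj i j then f i ^ (2 * θ) * f j ^ (2 * θ) else 0) ≤
      ξ ^ (2 * θ) := by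
  classical
  obtain ⟨root⟩ : Nonempty (Fin n) := hG.isConnected.nonempty
  choose pa hpa hpa' using (hG.existsUnique_path · root)
  -- key: every edge is of the form s(w, second vertex of path from w to root)
  have main : ∀ x y, G.Adj x y → (pa x).length ≤ (pa y).length →
      ¬ (pa y).Nil ∧ s(y, (pa y).getVert 1) = s(x, y) := by
    intro x y h h'
    have hy : y ∉ (pa x).support := by
      intro hy
      have hto : (pa x).takeUntil y hy = .cons h .nil := by
        refine (hG.existsUnique_path _ _).unique ((hpa _).takeUntil _) ?_
        simp [h.ne]
      rw [← take_spec _ hy] at h'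
      simp [hto, hpa' _ _ ((hpa _).dropUntil hy)] at h'
    have hcons : pa y = .cons h.symm (pa x) :=
      (hpa' _ (.cons h.symm (pa x)) ((cons_isPath_iff _ _).2 ⟨hpa _, hy⟩)).symm
    refine ⟨by rw [hcons]; exact not_nil_cons, ?_⟩
    rw [hcons]
    simp [Sym2.eq_swap]
  have key : ∀ x y, G.Adj x y → ∃ w, ¬ (pa w).Nil ∧ s(w, (pa w).getVert 1) = s(x, y) := by
    intro x y h
    rcases le_total (pa x).length (pa y).length with h' | h'
    · exact ⟨y, main x y h h'⟩
    · obtain ⟨h1, h2⟩ := main y x h.symm h'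
      exact ⟨x, h1, by rw [h2, Sym2.eq_swap]⟩
  -- the "child" map
  obtain ⟨c, hcspec⟩ : ∃ c : Fin n × Fin n → Fin n, ∀ p : Fin n × Fin n, G.Adj p.1 p.2 →
      s(c p, (pa (c p)).getVert 1) = s(p.1, p.2) := by
    refine ⟨fun p => if h : G.Adj p.1 p.2 then (key p.1 p.2 h).choose else p.1, fun p h => ?_⟩
    dsimp only
    rw [dif_pos h]
    exact (key p.1 p.2 h).choose_spec.2
  have hcmem : ∀ p : Fin n × Fin n, G.Adj p.1 p.2 → c p = p.1 ∨ c p = p.2 := by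
    intro p h
    have := hcspec p h
    rw [Sym2.eq_iff] at this
    tauto
  -- rewrite the double sum as a sum over a filtered set
  set S : Finset (Fin n × Fin n) :=
    Finset.univ.filter (fun p => p.1 < p.2 ∧ G.Adj p.1 p.2) with hS
  have hrw : (∑ i : Fin n, ∑ j : Fin n,
      if i < j ∧ G.Adj i j then f i ^ (2 * θ) * f j ^ (2 * θ) else 0)
      = ∑ p ∈ S, f p.1 ^ (2 * θ) * f p.2 ^ (2 * θ) := by
    rw [hS, Finset.sum_filter, ← Finset.univ_product_univ, Finset.sum_product]
  rw [hrw]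
  have hθ0 : (0:ℝ) ≤ 2 * θ := by linarith
  have hθ2 : (0:ℝ) ≤ 2 * θ - 2 := by linarith
  have hfb : ∀ i : Fin n, f i ^ (2 * θ) ≤ ξ ^ (2 * θ) := fun i =>
    Real.rpow_le_rpow (hf i).1 (hf i).2 hθ0
  have hfnn : ∀ i : Fin n, 0 ≤ f i ^ (2 * θ) := fun i => Real.rpow_nonneg (hf i).1 _
  -- step 1: bound each term by ξ^(2θ) * f (c p) ^ (2θ)
  have step1 : ∑ p ∈ S, f p.1 ^ (2 * θ) * f p.2 ^ (2 * θ)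
      ≤ ∑ p ∈ S, ξ ^ (2 * θ) * f (c p) ^ (2 * θ) := by
    refine Finset.sum_le_sum fun p hp => ?_
    rw [hS, Finset.mem_filter] at hp
    rcases hcmem p hp.2.2 with h1 | h1 <;> rw [h1]
    · rw [mul_comm (ξ ^ (2*θ))]
      exact mul_le_mul_of_nonneg_left (hfb p.2) (hfnn p.1)
    · exact mul_le_mul_of_nonneg_right (hfb p.1) (hfnn p.2)
  -- step 2: c is injective on S
  have hinj : Set.InjOn c S := by
    intro p hp q hq hpq
    rw [hS, Finset.coe_filter] at hp hq
    obtain ⟨-, hp1, hp2⟩ := hp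
    obtain ⟨-, hq1, hq2⟩ := hq
    have : s(p.1, p.2) = s(q.1, q.2) := by
      rw [← hcspec p hp2, ← hcspec q hq2, hpq]
    rw [Sym2.eq_iff] at this
    rcases this with ⟨h1, h2⟩ | ⟨h1, h2⟩
    · exact Prod.ext h1 h2
    · exfalso; rw [h1] at hp1; rw [← h2] at hq1; exact absurd (hp1.trans hq1) (lt_irrefl _)
  have step2 : ∑ p ∈ S, f (c p) ^ (2 * θ) ≤ ∑ i : Fin n, f i ^ (2 * θ) := by
    have himg : ∑ v ∈ S.image c, f v ^ (2 * θ) = ∑ p ∈ S, f (c p) ^ (2 * θ) :=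
      Finset.sum_image (fun x hx y hy h => hinj hx hy h)
    rw [← himg]
    exact Finset.sum_le_sum_of_subset_of_nonneg (Finset.subset_univ _)
      (fun i _ _ => hfnn i)
  -- step 3: ∑ f i ^ (2θ) ≤ ξ^(2θ-2)
  have step3 : ∑ i : Fin n, f i ^ (2 * θ) ≤ ξ ^ (2 * θ - 2) := by
    calc ∑ i : Fin n, f i ^ (2 * θ) ≤ ∑ i : Fin n, ξ ^ (2 * θ - 2) * f i ^ 2 := by
          refine Finset.sum_le_sum fun i _ => ?_
          rcases eq_or_lt_of_le (hf i).1 with h0 | h0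
          · rw [← h0, Real.zero_rpow (by positivity)]
            positivity
          · have : f i ^ (2 * θ) = f i ^ (2 * θ - 2) * f i ^ 2 := by
              rw [← Real.rpow_two, ← Real.rpow_add h0]; ring_nf
            rw [this]
            exact mul_le_mul_of_nonneg_right
              (Real.rpow_le_rpow (hf i).1 (hf i).2 hθ2) (by positivity)
      _ = ξ ^ (2 * θ - 2) := by rw [← Finset.mul_sum, hsum, mul_one]
  have hξ1 : ξ ^ (2 * θ - 2) ≤ 1 :=
    Real.rpow_le_one hξ0.le (by linarith) hθ2
  calc ∑ p ∈ S, f p.1 ^ (2 * θ) * f p.2 ^ (2 * θ)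
      ≤ ∑ p ∈ S, ξ ^ (2 * θ) * f (c p) ^ (2 * θ) := step1
    _ = ξ ^ (2 * θ) * ∑ p ∈ S, f (c p) ^ (2 * θ) := by rw [Finset.mul_sum]
    _ ≤ ξ ^ (2 * θ) * ξ ^ (2 * θ - 2) := by
        refine mul_le_mul_of_nonneg_left (step2.trans step3) (Real.rpow_nonneg hξ0.le _)
    _ ≤ ξ ^ (2 * θ) * 1 := mul_le_mul_of_nonneg_left hξ1 (Real.rpow_nonneg hξ0.le _)
    _ = ξ ^ (2 * θ) := mul_one _
end

section
/- For α > 2 and ρ > −1, the function f(γ) = 1 − γ − (1+ρ)^α · (2/(α−2)) · (1 − 2/α)^{α/2} · γ^{1−α/2} on (0,∞) attains maximum value 1 − (1+ρ)² exactly at γ = (1+ρ)²(1 − 2/α). -/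
/-- For `α > 2` and `ρ > −1`, the function
`f(γ) = 1 − γ − (1+ρ)^α (2/(α−2)) (1 − 2/α)^{α/2} γ^{1−α/2}` on `(0,∞)` attains its
maximum value `1 − (1+ρ)²` exactly at `γ = (1+ρ)² (1 − 2/α)`. -/
theorem max_of_star_rate_function (α ρ : ℝ) (hα : 2 < α) (hρ : -1 < ρ)
    (f : ℝ → ℝ)
    (hf : ∀ γ : ℝ, f γ =
      1 - γ - (1 + ρ) ^ α * (2 / (α - 2)) * (1 - 2 / α) ^ (α / 2) * γ ^ (1 - α / 2)) :
    f ((1 + ρ) ^ 2 * (1 - 2 / α)) = 1 - (1 + ρ) ^ 2 ∧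
    ∀ γ : ℝ, 0 < γ → γ ≠ (1 + ρ) ^ 2 * (1 - 2 / α) →
      f γ < 1 - (1 + ρ) ^ 2 := by
  have hc : (0:ℝ) < 1 + ρ := by linarith
  have hα0 : (0:ℝ) < α := by linarith
  have hα2 : (0:ℝ) < α - 2 := by linarith
  have hb : (0:ℝ) < 1 - 2 / α := by
    rw [sub_pos, div_lt_one hα0]; exact hα
  set c := 1 + ρ with hcdef
  set b := 1 - 2 / α with hbdef
  have hγ0 : (0:ℝ) < c ^ 2 * b := by positivity
  -- key power identity: (c^2*b)^(α/2) = c^α * b^(α/2)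
  have hpow : (c ^ 2 * b) ^ (α / 2) = c ^ α * b ^ (α / 2) := by
    rw [Real.mul_rpow (by positivity) hb.le]
    congr 1
    rw [← Real.rpow_natCast c 2, ← Real.rpow_mul hc.le]
    norm_num
    congr 1
    ring
  -- rewrite the constant K
  have hK : c ^ α * (2 / (α - 2)) * b ^ (α / 2)
      = 2 / (α - 2) * (c ^ 2 * b) ^ (α / 2) := by
    rw [hpow]; ring
  have haux : (c ^ 2 * b) ^ (α / 2) * (c ^ 2 * b) ^ (1 - α / 2) = c ^ 2 * b := by
    rw [← Real.rpow_add hγ0]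
    norm_num
  constructor
  · rw [hf, hK]
    have : 2 / (α - 2) * (c ^ 2 * b) ^ (α / 2) * (c ^ 2 * b) ^ (1 - α / 2)
        = 2 / (α - 2) * (c ^ 2 * b) := by
      rw [mul_assoc, haux]
    rw [this, hbdef]
    field_simp
    ring
  · intro γ hγ hne
    rw [hf, hK]
    -- Bernoulli inequality with s = c^2*b/γ - 1, p = α/2
    have hs1 : (-1:ℝ) ≤ c ^ 2 * b / γ - 1 := by
      have : (0:ℝ) < c ^ 2 * b / γ := by positivity
      linarith
    have hs2 : c ^ 2 * b / γ - 1 ≠ 0 := by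
      intro h
      apply hne
      have : c ^ 2 * b / γ = 1 := by linarith [sub_eq_zero.mp h]
      field_simp at this
      linarith
    have hp : (1:ℝ) < α / 2 := by linarith
    have hbern := one_add_mul_self_lt_rpow_one_add hs1 hs2 hp
    have h1 : (1:ℝ) + (c ^ 2 * b / γ - 1) = c ^ 2 * b / γ := by ring
    rw [h1] at hbern
    -- multiply by γ
    have hrpowγ : γ * (c ^ 2 * b / γ) ^ (α / 2)
        = (c ^ 2 * b) ^ (α / 2) * γ ^ (1 - α / 2) := by
      rw [Real.div_rpow hγ0.le hγ.le, Real.rpow_sub hγ, Real.rpow_one]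
      field_simp
    have key : γ + α / 2 * (c ^ 2 * b - γ) < (c ^ 2 * b) ^ (α / 2) * γ ^ (1 - α / 2) := by
      rw [← hrpowγ]
      have := mul_lt_mul_of_pos_left hbern hγ
      calc γ + α / 2 * (c ^ 2 * b - γ)
          = γ * (1 + α / 2 * (c ^ 2 * b / γ - 1)) := by field_simp
        _ < γ * (c ^ 2 * b / γ) ^ (α / 2) := this
    have hfrac : (0:ℝ) < 2 / (α - 2) := by positivity
    have := mul_lt_mul_of_pos_left key hfrac
    have hfinal : 1 - γ - 2 / (α - 2) * ((c ^ 2 * b) ^ (α / 2) * γ ^ (1 - α / 2))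
        < 1 - γ - 2 / (α - 2) * (γ + α / 2 * (c ^ 2 * b - γ)) := by linarith
    calc 1 - γ - 2 / (α - 2) * (c ^ 2 * b) ^ (α / 2) * γ ^ (1 - α / 2)
        = 1 - γ - 2 / (α - 2) * ((c ^ 2 * b) ^ (α / 2) * γ ^ (1 - α / 2)) := by ring
      _ < 1 - γ - 2 / (α - 2) * (γ + α / 2 * (c ^ 2 * b - γ)) := hfinal
      _ = 1 - c ^ 2 := by rw [hbdef]; field_simp; ring
end

section
/- Let α > 2 and let Y₁,…,Y_k (k ≥ 2) be i.i.d. random variables with P(|Y_i| ≥ s) ≤ C₂ e^{−s^α} for all s > 0, where C₂ ≥ 1. Then for all t > k, P(Y₁² + ⋯ + Y_k² ≥ t) ≤ C₂^k (2et/k)^k e^{−(t−k)^{α/2} k^{1−α/2}}. -/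
/-!
If `∑ Y_i² ≥ t`, the integer parts `⌊Y_i²⌋` dominate a weak composition `f` of `⌊t⌋ + 1 - k` into
`k` parts. A union bound over the at most `binom(⌊t⌋ + 1, k) ≤ (2et/k)^k` such compositions,
independence and the tail bound `P(Y_i² ≥ f_i) ≤ C₂ e^{-f_i^{α/2}}` leave the estimate
`∑ f_i^{α/2} ≥ k^{1-α/2} (∑ f_i)^{α/2}`, which is the power-mean inequality for `α/2 ≥ 1`.
-/

open MeasureTheory ProbabilityTheory Finset

namespace Finset

lemma card_piAntidiag_nat {ι : Type*} [DecidableEq ι] (s : Finset ι) (n : ℕ) :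
    #(piAntidiag s n) = (#s + n - 1).choose n := by
  rw [← card_finsuppAntidiag_nat_eq_choose, finsuppAntidiag, card_map, card_attach]

lemma exists_mem_piAntidiag_le {ι : Type*} [DecidableEq ι] (s : Finset ι) (g : ι → ℕ) {n : ℕ}
    (hn : n ≤ ∑ i ∈ s, g i) : ∃ f ∈ piAntidiag s n, f ≤ g := by
  induction s using Finset.induction_on generalizing n with
  | empty => exact ⟨0, by simp_all, fun _ => Nat.zero_le _⟩
  | insert a s ha ih =>
    rw [sum_insert ha] at hn
    obtain ⟨f, hf, hfg⟩ := ih (n := n - min (g a) n) (by omega)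
    rw [mem_piAntidiag] at hf
    refine ⟨Function.update f a (min (g a) n), mem_piAntidiag.2 ⟨?_, fun i hi => ?_⟩, fun i => ?_⟩
    · rw [sum_insert ha, Function.update_self, sum_update_of_notMem ha, hf.1]
      omega
    · rcases eq_or_ne i a with rfl | hia
      · exact mem_insert_self i s
      · rw [Function.update_of_ne hia] at hi
        exact mem_insert_of_mem (hf.2 i hi)
    · rcases eq_or_ne i a with rfl | hia
      · simp
      · simpa [hia] using hfg i

lemma card_piAntidiag_univ_le_choose {ι : Type*} [Fintype ι] [DecidableEq ι] {n : ℕ}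
    (h : Fintype.card ι ≤ n + 1) :
    #(piAntidiag (univ : Finset ι) (n + 1 - Fintype.card ι)) ≤ (n + 1).choose (Fintype.card ι) := by
  rw [card_piAntidiag_nat, card_univ, ← Nat.choose_symm h]
  exact Nat.choose_le_choose _ (by omega)

end Finset

lemma Nat.choose_le_exp_mul_div_pow (n k : ℕ) :
    (n.choose k : ℝ) ≤ (Real.exp 1 * n / k) ^ k := by
  calc (n.choose k : ℝ) ≤ (n : ℝ) ^ k / k.factorial := Nat.choose_le_pow_div k n
    _ = ((k : ℝ) ^ k / k.factorial) * (n / k) ^ k := by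
      rw [div_pow]; field_simp
    _ ≤ Real.exp k * (n / k) ^ k := by
      gcongr; exact Real.pow_div_factorial_le_exp _ (Nat.cast_nonneg k) k
    _ = (Real.exp 1 * n / k) ^ k := by
      rw [← Real.exp_one_pow, ← mul_pow, mul_div_assoc]

lemma card_piAntidiag_floor_le {ι : Type*} [Fintype ι] [DecidableEq ι] {t : ℝ} (ht₁ : 1 ≤ t)
    (ht : Fintype.card ι ≤ t) :
    (#(piAntidiag (univ : Finset ι) (⌊t⌋₊ + 1 - Fintype.card ι)) : ℝ) ≤
      (2 * Real.exp 1 * t / Fintype.card ι) ^ Fintype.card ι := by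
  have hk : Fintype.card ι ≤ ⌊t⌋₊ + 1 := (Nat.le_floor ht).trans (Nat.le_succ _)
  calc (#(piAntidiag (univ : Finset ι) (⌊t⌋₊ + 1 - Fintype.card ι)) : ℝ)
      ≤ (⌊t⌋₊ + 1).choose (Fintype.card ι) := mod_cast card_piAntidiag_univ_le_choose hk
    _ ≤ (Real.exp 1 * (⌊t⌋₊ + 1 : ℕ) / Fintype.card ι) ^ Fintype.card ι :=
      Nat.choose_le_exp_mul_div_pow _ _
    _ ≤ (2 * Real.exp 1 * t / Fintype.card ι) ^ Fintype.card ι := by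
      rw [mul_comm 2, mul_assoc]
      gcongr
      push_cast
      linarith [Nat.floor_le (zero_le_one.trans ht₁)]

lemma Nat.lt_sum_floor_add_card {ι : Type*} [Fintype ι] [Nonempty ι] {x : ι → ℝ} {n : ℕ}
    (hn : (n : ℝ) ≤ ∑ i, x i) :
    n < ∑ i, ⌊x i⌋₊ + Fintype.card ι := by
  have : ∑ i, x i < ∑ i, ((⌊x i⌋₊ : ℝ) + 1) :=
    sum_lt_sum_of_nonempty univ_nonempty fun i _ => Nat.lt_floor_add_one (x i)
  rw [sum_add_distrib, sum_const, Finset.card_univ, nsmul_one] at this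
  exact_mod_cast hn.trans_lt this

lemma Real.rpow_mul_card_rpow_le_sum_rpow {ι : Type*} {s : Finset ι} (hs : s.Nonempty)
    {x : ι → ℝ} (hx : ∀ i ∈ s, 0 ≤ x i) {p a : ℝ} (hp : 1 ≤ p) (ha : 0 ≤ a)
    (has : a ≤ ∑ i ∈ s, x i) :
    a ^ p * (#s : ℝ) ^ (1 - p) ≤ ∑ i ∈ s, x i ^ p := by
  have hs0 : (0 : ℝ) < #s := by exact_mod_cast hs.card_pos
  calc a ^ p * (#s : ℝ) ^ (1 - p) ≤ (∑ i ∈ s, x i) ^ p * (#s : ℝ) ^ (1 - p) := by gcongr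
    _ ≤ ((#s : ℝ) ^ (p - 1) * ∑ i ∈ s, x i ^ p) * (#s : ℝ) ^ (1 - p) := by
      gcongr; exact Real.rpow_sum_le_const_mul_sum_rpow_of_nonneg s hp hx
    _ = ∑ i ∈ s, x i ^ p := by
      rw [mul_right_comm, ← Real.rpow_add hs0]; simp

section Tail

variable {Ω : Type*} [MeasurableSpace Ω] {μ : Measure Ω} [IsZeroOrProbabilityMeasure μ] {α C : ℝ}

lemma measure_le_sq_le_of_tail {Y : Ω → ℝ} (hα : 0 < α) (hC : 1 ≤ C)
    (htail : ∀ s : ℝ, 0 < s → μ {ω | s ≤ |Y ω|} ≤ ENNReal.ofReal (C * Real.exp (-(s ^ α))))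
    {c : ℝ} (hc : 0 ≤ c) :
    μ {ω | c ≤ Y ω ^ 2} ≤ ENNReal.ofReal (C * Real.exp (-(c ^ (α / 2)))) := by
  rcases hc.eq_or_lt with rfl | hc
  · rw [Real.zero_rpow (by positivity), neg_zero, Real.exp_zero, mul_one]
    exact prob_le_one.trans (ENNReal.one_le_ofReal.2 hC)
  · have hsqrt : {ω | c ≤ Y ω ^ 2} = {ω | √c ≤ |Y ω|} := by
      ext ω
      rw [Set.mem_ofPred_eq, Set.mem_ofPred_eq, ← sq_le_sq₀ (Real.sqrt_nonneg c) (abs_nonneg _),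
        Real.sq_sqrt hc.le, sq_abs]
    have hpow : √c ^ α = c ^ (α / 2) := by
      rw [Real.sqrt_eq_rpow, ← Real.rpow_mul hc.le, one_div_mul_eq_div]
    simpa only [hsqrt, hpow] using htail √c (Real.sqrt_pos.2 hc)

lemma measure_iInter_le_sq_le {ι : Type*} [Fintype ι] {Y : ι → Ω → ℝ} (hindep : iIndepFun Y μ)
    (hα : 0 < α) (hC : 1 ≤ C)
    (htail : ∀ i, ∀ s : ℝ, 0 < s →
      μ {ω | s ≤ |Y i ω|} ≤ ENNReal.ofReal (C * Real.exp (-(s ^ α))))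
    {x : ι → ℝ} (hx : ∀ i, 0 ≤ x i) :
    μ (⋂ i, {ω | x i ≤ Y i ω ^ 2}) ≤
      ENNReal.ofReal (C ^ Fintype.card ι * Real.exp (-∑ i, x i ^ (α / 2))) := by
  rw [hindep.meas_iInter (s := fun i => {ω | x i ≤ Y i ω ^ 2}) fun i => ⟨{y | x i ≤ y ^ 2},
    measurableSet_le measurable_const (measurable_id.pow_const 2), rfl⟩]
  calc ∏ i, μ {ω | x i ≤ Y i ω ^ 2}
      ≤ ∏ i, ENNReal.ofReal (C * Real.exp (-(x i ^ (α / 2)))) :=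
        prod_le_prod' fun i _ => measure_le_sq_le_of_tail hα hC (htail i) (hx i)
    _ = _ := by
      rw [← ENNReal.ofReal_prod_of_nonneg fun i _ => by positivity, prod_mul_distrib, prod_const,
        Finset.card_univ, ← Real.exp_sum, sum_neg_distrib]

lemma measure_iInter_le_sq_le_of_le_sum {ι : Type*} [Fintype ι] [Nonempty ι]
    {Y : ι → Ω → ℝ} (hindep : iIndepFun Y μ) (hα : 2 ≤ α) (hC : 1 ≤ C)
    (htail : ∀ i, ∀ s : ℝ, 0 < s →
      μ {ω | s ≤ |Y i ω|} ≤ ENNReal.ofReal (C * Real.exp (-(s ^ α))))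
    {x : ι → ℝ} (hx : ∀ i, 0 ≤ x i) {a : ℝ} (ha : 0 ≤ a) (hax : a ≤ ∑ i, x i) :
    μ (⋂ i, {ω | x i ≤ Y i ω ^ 2}) ≤ ENNReal.ofReal (C ^ Fintype.card ι *
      Real.exp (-(a ^ (α / 2) * (Fintype.card ι : ℝ) ^ (1 - α / 2)))) := by
  refine (measure_iInter_le_sq_le hindep (by linarith) hC htail hx).trans ?_
  gcongr
  simpa using Real.rpow_mul_card_rpow_le_sum_rpow univ_nonempty (fun i _ => hx i)
    (by linarith) ha hax

end Tail

lemma setOf_le_sum_sq_subset_iUnion_piAntidiag {Ω ι : Type*} [Fintype ι] [DecidableEq ι]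
    [Nonempty ι] (Y : ι → Ω → ℝ) (n : ℕ) :
    {ω | (n : ℝ) ≤ ∑ i, Y i ω ^ 2} ⊆
      ⋃ f ∈ piAntidiag univ (n + 1 - Fintype.card ι), ⋂ i, {ω | (f i : ℝ) ≤ Y i ω ^ 2} := by
  intro ω hω
  have hfloor := Nat.lt_sum_floor_add_card hω
  obtain ⟨f, hf, hfg⟩ :=
    exists_mem_piAntidiag_le univ (fun i => ⌊Y i ω ^ 2⌋₊) (n := n + 1 - Fintype.card ι) (by omega)
  simp only [Set.mem_iUnion, Set.mem_iInter, Set.mem_ofPred_eq]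
  exact ⟨f, hf, fun i => (Nat.cast_le.2 (hfg i)).trans (Nat.floor_le (sq_nonneg _))⟩

theorem sum_sq_upper_tail_general {Ω : Type*} [MeasurableSpace Ω]
    (μ : Measure Ω) [IsProbabilityMeasure μ]
    (α : ℝ) (hα : 2 < α) (C₂ : ℝ) (hC₂ : 1 ≤ C₂)
    (k : ℕ) (hk : 2 ≤ k)
    (Y : Fin k → Ω → ℝ)
    (hindep : iIndepFun Y μ)
    (htail : ∀ i, ∀ s : ℝ, 0 < s →
      μ {ω | s ≤ |Y i ω|} ≤ ENNReal.ofReal (C₂ * Real.exp (-(s ^ α))))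
    (t : ℝ) (ht : (k : ℝ) < t) :
    μ {ω | t ≤ ∑ i, (Y i ω) ^ 2} ≤
      ENNReal.ofReal (C₂ ^ k * (2 * Real.exp 1 * t / k) ^ k *
        Real.exp (-((t - k) ^ (α / 2) * (k : ℝ) ^ (1 - α / 2)))) := by
  have : NeZero k := ⟨by omega⟩
  have ht0 : 0 ≤ t := (Nat.cast_nonneg k).trans ht.le
  have hk1 : (1 : ℝ) ≤ k := by exact_mod_cast (by omega : 1 ≤ k)
  have hkt : k ≤ ⌊t⌋₊ + 1 := (Nat.le_floor ht.le).trans (Nat.le_succ _)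
  set S := piAntidiag (univ : Finset (Fin k)) (⌊t⌋₊ + 1 - k)
  set E := C₂ ^ k * Real.exp (-((t - k) ^ (α / 2) * (k : ℝ) ^ (1 - α / 2)))
  have hterm (f) (hf : f ∈ S) : μ (⋂ i, {ω | (f i : ℝ) ≤ Y i ω ^ 2}) ≤ ENNReal.ofReal E := by
    have hsum : t - k ≤ ∑ i, (f i : ℝ) := by
      rw [← Nat.cast_sum, (mem_piAntidiag.1 hf).1, Nat.cast_sub hkt]
      push_cast
      linarith [Nat.lt_floor_add_one t]
    simpa using measure_iInter_le_sq_le_of_le_sum hindep hα.le hC₂ htail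
      (fun i => (f i).cast_nonneg) (by linarith) hsum
  calc μ {ω | t ≤ ∑ i, (Y i ω) ^ 2} ≤ μ {ω | (⌊t⌋₊ : ℝ) ≤ ∑ i, Y i ω ^ 2} :=
        measure_mono fun ω hω => (Nat.floor_le ht0).trans hω
    _ ≤ ∑ f ∈ S, μ (⋂ i, {ω | (f i : ℝ) ≤ Y i ω ^ 2}) := by
        simpa using (measure_mono (setOf_le_sum_sq_subset_iUnion_piAntidiag Y ⌊t⌋₊)).trans
          (measure_biUnion_finset_le _ _)
    _ ≤ ENNReal.ofReal (#S * E) := by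
        simpa [ENNReal.ofReal_mul] using sum_le_sum hterm
    _ ≤ _ := by
        refine ENNReal.ofReal_le_ofReal ?_
        rw [mul_comm (C₂ ^ k), mul_assoc]
        gcongr
        simpa using card_piAntidiag_floor_le (ι := Fin k) (by linarith) (by simpa using ht.le)

/-- Upper tail bound: if `Y₁,…,Y_k` (`k ≥ 2`) are i.i.d. with
`P(|Y_i| ≥ s) ≤ C₂ e^{−s^α}` for all `s > 0` (`C₂ ≥ 1`, `α > 2`), then for `t > k`,
`P(Y₁² + ⋯ + Y_k² ≥ t) ≤ C₂^k (2et/k)^k e^{−(t−k)^{α/2} k^{1−α/2}}`. -/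
theorem sum_sq_upper_tail {Ω : Type*} [MeasurableSpace Ω]
    (μ : Measure Ω) [IsProbabilityMeasure μ]
    (α : ℝ) (hα : 2 < α) (C₂ : ℝ) (hC₂ : 1 ≤ C₂)
    (k : ℕ) (hk : 2 ≤ k)
    (Y : Fin k → Ω → ℝ) (hmeas : ∀ i, Measurable (Y i))
    (hindep : iIndepFun Y μ)
    (hident : ∀ i j, Measure.map (Y i) μ = Measure.map (Y j) μ)
    (htail : ∀ i, ∀ s : ℝ, 0 < s →
      μ {ω | s ≤ |Y i ω|} ≤ ENNReal.ofReal (C₂ * Real.exp (-(s ^ α))))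
    (t : ℝ) (ht : (k : ℝ) < t) :
    μ {ω | t ≤ ∑ i, (Y i ω) ^ 2} ≤
      ENNReal.ofReal (C₂ ^ k * (2 * Real.exp 1 * t / k) ^ k *
        Real.exp (-((t - k) ^ (α / 2) * (k : ℝ) ^ (1 - α / 2)))) :=
  sum_sq_upper_tail_general μ α hα C₂ hC₂ k hk Y hindep htail t ht
end
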